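/- arXiv:2202.09590 — 8 statements merged into one kernel-verified Lean document; each statement's English description precedes it below -/
import Mathlib

section
/- If a group G is covered by finitely many left cosets g₁G₁ ∪ … ∪ gₛGₛ of (not necessarily distinct) subgroups G₁,…,Gₛ, then ∑ᵢ 1/[G:Gᵢ] ≥ 1, where 1/[G:Gᵢ] is interpreted as 0 when the index is infinite. -/
open scoped Pointwise

/-- **B. H. Neumann's covering theorem.** If a group `G` is covered by finitely many left
cosets `g₁G₁ ∪ … ∪ gₛGₛ` of (not necessarily distinct) subgroups, then
`∑ᵢ 1/[G:Gᵢ] ≥ 1`, where `1/[G:Gᵢ]` is interpreted as `0` when the index is infinite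
(recall that `Subgroup.index` is `0` for subgroups of infinite index). -/
theorem neumann_coset_cover {G : Type*} [Group G] {s : ℕ} (g : Fin s → G)
    (H : Fin s → Subgroup G) (hcov : ∀ x : G, ∃ i, x ∈ g i • (H i : Set G)) :
    1 ≤ ∑ i, ((H i).index : ℝ)⁻¹ := by
  have hcovers : ⋃ i ∈ (Finset.univ : Finset (Fin s)), g i • (H i : Set G) = Set.univ := by
    ext x
    simpa using hcov x
  have hq := Subgroup.one_le_sum_inv_index_of_leftCoset_cover hcovers
  have : ((1 : ℚ) : ℝ) ≤ ((∑ i ∈ Finset.univ, ((H i).index : ℚ)⁻¹ : ℚ) : ℝ) := by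
    exact_mod_cast hq
  simpa using this
end

section
/- Let a group G act on a set U, let 𝓕 be a G-invariant family of finite nonempty subsets of U with |F| ≤ m for all F ∈ 𝓕, and let X ⊆ U be a finite set meeting every member of 𝓕. Then the set Y = {y ∈ U : the orbit Gy is finite and |Gy ∩ X| ≥ |Gy|/m} is G-invariant, satisfies |Y| ≤ m·|X|, and meets every member of 𝓕. -/
open scoped Pointwise

/-- The invariant system of representatives constructed in Theorem 1.1:
`Y = {y | Gy is finite and |Gy ∩ X| ≥ |Gy|/m}`. -/
def goodSet (G : Type*) {U : Type*} [Group G] [MulAction G U] (m : ℕ) (X : Set U) : Set U :=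
  {y | (MulAction.orbit G y).Finite ∧
    (MulAction.orbit G y).ncard ≤ m * (MulAction.orbit G y ∩ X).ncard}

open MulAction

private lemma some_congr {α : Type*} {A B : Set α} (e : A = B) (h1 : A.Nonempty)
    (h2 : B.Nonempty) : h1.some = h2.some := by subst e; rfl

private lemma ncard_biUnion_le_mul {U : Type*} (m : ℕ) (X : Set U) (S : U → Set U)
    (Rs : Finset U)
    (hfin : ∀ x ∈ Rs, (S x).Finite)
    (hcard : ∀ x ∈ Rs, (S x).ncard ≤ m * (S x ∩ X).ncard)
    (hdisj : ∀ x ∈ Rs, ∀ y ∈ Rs, x ≠ y → Disjoint (S x) (S y)) :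
    (⋃ x ∈ Rs, S x).ncard ≤ m * (⋃ x ∈ Rs, S x ∩ X).ncard := by
  classical
  induction Rs using Finset.induction_on with
  | empty => simp
  | @insert a Rs' ha ih =>
    have hfin' : ∀ x ∈ Rs', (S x).Finite := fun x hx => hfin x (Finset.mem_insert_of_mem hx)
    have hSa : (S a).Finite := hfin a (Finset.mem_insert_self a Rs')
    have hUfin : (⋃ x ∈ Rs', S x ∩ X).Finite :=
      Rs'.finite_toSet.biUnion (fun x hx => (hfin' x hx).inter_of_left X)
    have hd : Disjoint (S a ∩ X) (⋃ x ∈ Rs', S x ∩ X) := by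
      refine Set.disjoint_iUnion₂_right.mpr fun x hx => ?_
      exact Disjoint.mono Set.inter_subset_left Set.inter_subset_left
        (hdisj a (Finset.mem_insert_self a Rs') x (Finset.mem_insert_of_mem hx)
          (fun h => ha (h ▸ hx)))
    rw [Finset.set_biUnion_insert, Finset.set_biUnion_insert]
    calc (S a ∪ ⋃ x ∈ Rs', S x).ncard ≤ (S a).ncard + (⋃ x ∈ Rs', S x).ncard :=
          Set.ncard_union_le _ _
      _ ≤ m * (S a ∩ X).ncard + m * (⋃ x ∈ Rs', S x ∩ X).ncard := by
          refine add_le_add (hcard a (Finset.mem_insert_self a Rs')) ?_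
          exact ih hfin' (fun x hx => hcard x (Finset.mem_insert_of_mem hx))
            (fun x hx y hy hxy => hdisj x (Finset.mem_insert_of_mem hx) y
              (Finset.mem_insert_of_mem hy) hxy)
      _ = m * ((S a ∩ X).ncard + (⋃ x ∈ Rs', S x ∩ X).ncard) := by ring
      _ = m * ((S a ∩ X) ∪ ⋃ x ∈ Rs', S x ∩ X).ncard := by
          rw [Set.ncard_union_eq hd (hSa.inter_of_left X) hUfin]

/-- **Theorem 1.1.** Let a group `G` act on a set `U`, let `𝓕` be a `G`-invariant family of
finite nonempty subsets of `U` with `|F| ≤ m` for all `F ∈ 𝓕`, and let `X ⊆ U` be a finite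
set meeting every member of `𝓕`. Then the set
`Y = {y ∈ U | the orbit Gy is finite and |Gy ∩ X| ≥ |Gy|/m}` is `G`-invariant,
satisfies `|Y| ≤ m·|X|`, and meets every member of `𝓕`. -/
theorem invariant_system_of_representatives {G U : Type*} [Group G] [MulAction G U]
    (𝓕 : Set (Set U)) (m : ℕ)
    (hF : ∀ F ∈ 𝓕, F.Finite ∧ F.Nonempty ∧ F.ncard ≤ m)
    (hinv : ∀ g : G, ∀ F ∈ 𝓕, g • F ∈ 𝓕)
    (X : Set U) (hXfin : X.Finite) (hX : ∀ F ∈ 𝓕, (X ∩ F).Nonempty) :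
    (∀ g : G, g • goodSet G m X = goodSet G m X) ∧
      (goodSet G m X).Finite ∧ (goodSet G m X).ncard ≤ m * X.ncard ∧
      ∀ F ∈ 𝓕, (goodSet G m X ∩ F).Nonempty := by
  classical
  -- membership in `goodSet` depends only on the orbit
  have horbY : ∀ {y z : U}, z ∈ orbit G y → y ∈ goodSet G m X → z ∈ goodSet G m X := by
    intro y z hz hy
    have he : orbit G z = orbit G y := orbit_eq_iff.mpr hz
    simp only [goodSet, Set.mem_setOf_eq] at hy ⊢
    rw [he]; exact hy
  -- Part 1 : invariance
  have part1 : ∀ g : G, g • goodSet G m X = goodSet G m X := by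
    intro g
    ext y
    rw [Set.mem_smul_set_iff_inv_smul_mem]
    constructor
    · intro h
      have : y ∈ orbit G (g⁻¹ • y) := by
        have := mem_orbit (g⁻¹ • y) g
        rwa [smul_inv_smul] at this
      exact horbY this h
    · intro h
      exact horbY (mem_orbit y g⁻¹) h
  -- every good point's orbit meets X
  have hmeet : ∀ y ∈ goodSet G m X, (orbit G y ∩ X).Nonempty := by
    intro y hy
    obtain ⟨hfin, hle⟩ := hy
    apply Set.nonempty_of_ncard_ne_zero
    intro h0
    rw [h0, mul_zero, Nat.le_zero] at hle
    have hpos : 0 < (orbit G y).ncard := (Set.ncard_pos hfin).mpr ⟨y, mem_orbit_self y⟩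
    omega
  set Y := goodSet G m X with hYdef
  -- choice of representative in X for each good orbit
  set f : U → U := fun y => if h : (orbit G y ∩ X).Nonempty then h.some else y with hfdef
  have hf1 : ∀ y ∈ Y, f y ∈ orbit G y ∩ X := by
    intro y hy
    simp only [hfdef]
    rw [dif_pos (hmeet y hy)]
    exact (hmeet y hy).some_mem
  have hfcong : ∀ y ∈ Y, ∀ z ∈ Y, orbit G y = orbit G z → f y = f z := by
    intro y hy z hz he
    simp only [hfdef]
    rw [dif_pos (hmeet y hy), dif_pos (hmeet z hz)]
    exact some_congr (by rw [he]) _ _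
  set R : Set U := f '' Y with hRdef
  have hRX : R ⊆ X := by
    rintro x ⟨y, hy, rfl⟩
    exact (hf1 y hy).2
  have hRfin : R.Finite := hXfin.subset hRX
  set Rs : Finset U := hRfin.toFinset with hRsdef
  have hRY : ∀ x ∈ R, x ∈ Y := by
    rintro x ⟨y, hy, rfl⟩
    exact horbY (hf1 y hy).1 hy
  have hYeq : Y = ⋃ x ∈ Rs, orbit G x := by
    ext z
    simp only [Set.mem_iUnion, exists_prop]
    constructor
    · intro hz
      refine ⟨f z, by simp only [hRsdef, Set.Finite.mem_toFinset]; exact ⟨z, hz, rfl⟩, ?_⟩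
      have : orbit G (f z) = orbit G z := orbit_eq_iff.mpr (hf1 z hz).1
      rw [this]; exact mem_orbit_self z
    · rintro ⟨x, hx, hzx⟩
      rw [hRsdef, Set.Finite.mem_toFinset] at hx
      exact horbY hzx (hRY x hx)
  have horbfin : ∀ x ∈ Rs, (orbit G x).Finite := by
    intro x hx
    rw [hRsdef, Set.Finite.mem_toFinset] at hx
    exact (hRY x hx).1
  have hcard : ∀ x ∈ Rs, (orbit G x).ncard ≤ m * (orbit G x ∩ X).ncard := by
    intro x hx
    rw [hRsdef, Set.Finite.mem_toFinset] at hx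
    exact (hRY x hx).2
  have hdisj : ∀ x ∈ Rs, ∀ y ∈ Rs, x ≠ y → Disjoint (orbit G x) (orbit G y) := by
    intro x hx y hy hxy
    rw [hRsdef, Set.Finite.mem_toFinset] at hx hy
    by_contra hnd
    obtain ⟨z, hz1, hz2⟩ := Set.not_disjoint_iff.mp hnd
    have he : orbit G x = orbit G y :=
      (orbit_eq_iff.mpr hz1).symm.trans (orbit_eq_iff.mpr hz2)
    obtain ⟨y1, hy1, rfl⟩ := hx
    obtain ⟨y2, hy2, rfl⟩ := hy
    have e1 : orbit G (f y1) = orbit G y1 := orbit_eq_iff.mpr (hf1 y1 hy1).1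
    have e2 : orbit G (f y2) = orbit G y2 := orbit_eq_iff.mpr (hf1 y2 hy2).1
    exact hxy (hfcong y1 hy1 y2 hy2 (by rw [← e1, he, e2]))
  -- Part 2 : finiteness and cardinality
  have part2a : Y.Finite := by
    rw [hYeq]
    exact Rs.finite_toSet.biUnion horbfin
  have part2b : Y.ncard ≤ m * X.ncard := by
    rw [hYeq]
    calc (⋃ x ∈ Rs, orbit G x).ncard ≤ m * (⋃ x ∈ Rs, orbit G x ∩ X).ncard :=
          ncard_biUnion_le_mul m X _ Rs horbfin hcard hdisj
      _ ≤ m * X.ncard := by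
          refine Nat.mul_le_mul_left m (Set.ncard_le_ncard ?_ hXfin)
          exact Set.iUnion₂_subset fun x _ => Set.inter_subset_right
  -- Part 3 : Y meets every F
  refine ⟨part1, part2a, part2b, ?_⟩
  intro F hFm
  obtain ⟨hFfin, hFne, hFcard⟩ := hF F hFm
  have hm : 0 < m := by
    rcases Nat.eq_zero_or_pos m with hm0 | hm0
    · exfalso
      rw [hm0, Nat.le_zero] at hFcard
      have := (Set.ncard_pos hFfin).mpr hFne
      omega
    · exact hm0
  by_contra hcon
  have hbad : ∀ y ∈ F, ¬ ((orbit G y).Finite ∧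
      (orbit G y).ncard ≤ m * (orbit G y ∩ X).ncard) := by
    intro y hy hyg
    exact hcon ⟨y, hyg, hy⟩
  -- set up the coset cover
  set gg : U × U → G := fun p => if h : ∃ γ : G, γ • p.1 = p.2 then h.choose else 1 with hggdef
  set H : U × U → Subgroup G := fun p => stabilizer G p.1 with hHdef
  set s : Finset (U × U) :=
    (hFfin.prod hXfin).toFinset.filter (fun p => ∃ γ : G, γ • p.1 = p.2) with hsdef
  have hcovers : ⋃ p ∈ s, gg p • (H p : Set G) = Set.univ := by
    ext γ
    simp only [Set.mem_univ, iff_true, Set.mem_iUnion, exists_prop]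
    obtain ⟨x, hxX, hxF⟩ := hX (γ • F) (hinv γ F hFm)
    obtain ⟨y, hyF, rfl⟩ := hxF
    have hex : ∃ δ : G, δ • (y, γ • y).1 = (y, γ • y).2 := ⟨γ, rfl⟩
    refine ⟨(y, γ • y), ?_, ?_⟩
    · rw [hsdef, Finset.mem_filter, Set.Finite.mem_toFinset]
      exact ⟨Set.mk_mem_prod hyF hxX, hex⟩
    · rw [mem_leftCoset_iff]
      simp only [hHdef, SetLike.mem_coe, mem_stabilizer_iff]
      have hspec : gg (y, γ • y) • y = γ • y := by
        simp only [hggdef]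
        rw [dif_pos hex]
        exact hex.choose_spec
      rw [mul_smul, inv_smul_eq_iff]
      exact hspec.symm
  have key : (1 : ℚ) ≤ ∑ p ∈ s, ((H p).index : ℚ)⁻¹ :=
    Subgroup.one_le_sum_inv_index_of_leftCoset_cover hcovers
  -- compute / bound the sum
  set Fs : Finset U := hFfin.toFinset with hFsdef
  set Xs : Finset U := hXfin.toFinset with hXsdef
  have hsum : ∑ p ∈ s, ((H p).index : ℚ)⁻¹ =
      ∑ y ∈ Fs, ((Xs.filter (fun x => ∃ γ : G, γ • y = x)).card : ℚ) *
        (((stabilizer G y).index : ℚ))⁻¹ := by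
    rw [hsdef, Finset.sum_filter, ← Set.Finite.toFinset_prod hFfin hXfin, Finset.sum_product]
    refine Finset.sum_congr rfl fun y _ => ?_
    simp only [hHdef]
    rw [← Finset.sum_filter, Finset.sum_const, nsmul_eq_mul]
  have hbound : ∑ y ∈ Fs, ((Xs.filter (fun x => ∃ γ : G, γ • y = x)).card : ℚ) *
      (((stabilizer G y).index : ℚ))⁻¹ < 1 := by
    have hFs : Fs.Nonempty := by
      rw [hFsdef, Set.Finite.toFinset_nonempty]; exact hFne
    have hterm : ∀ y ∈ Fs, ((Xs.filter (fun x => ∃ γ : G, γ • y = x)).card : ℚ) *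
        (((stabilizer G y).index : ℚ))⁻¹ < ((m : ℚ))⁻¹ := by
      intro y hy
      rw [hFsdef, Set.Finite.mem_toFinset] at hy
      have hcnt : (Xs.filter (fun x => ∃ γ : G, γ • y = x)).card =
          (orbit G y ∩ X).ncard := by
        have he : (orbit G y ∩ X) =
            ↑(Xs.filter (fun x => ∃ γ : G, γ • y = x)) := by
          ext x
          simp only [hXsdef, Finset.coe_filter, Set.Finite.mem_toFinset, Set.mem_setOf_eq,
            Set.mem_inter_iff, mem_orbit_iff]
          tauto
        rw [he, Set.ncard_coe_finset]
      rw [hcnt, index_stabilizer]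
      have hmQ : (0 : ℚ) < m := Nat.cast_pos.mpr hm
      by_cases hfin : (orbit G y).Finite
      · have hlt : m * (orbit G y ∩ X).ncard < (orbit G y).ncard :=
          not_le.mp fun hb => hbad y hy ⟨hfin, hb⟩
        have hpos : 0 < (orbit G y).ncard := (Set.ncard_pos hfin).mpr ⟨y, mem_orbit_self y⟩
        have hnQ : (0 : ℚ) < ((orbit G y).ncard : ℚ) := Nat.cast_pos.mpr hpos
        rw [inv_eq_one_div, inv_eq_one_div, mul_one_div, div_lt_div_iff₀ hnQ hmQ]
        rw [mul_comm] at hlt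
        rw [one_mul]
        exact_mod_cast hlt
      · have h0 : (orbit G y).ncard = 0 := Set.Infinite.ncard hfin
        rw [h0]
        simp only [Nat.cast_zero, inv_zero, mul_zero]
        exact inv_pos.mpr hmQ
    calc ∑ y ∈ Fs, ((Xs.filter (fun x => ∃ γ : G, γ • y = x)).card : ℚ) *
          (((stabilizer G y).index : ℚ))⁻¹
        < ∑ _y ∈ Fs, ((m : ℚ))⁻¹ := Finset.sum_lt_sum_of_nonempty hFs hterm
      _ = Fs.card * ((m : ℚ))⁻¹ := by rw [Finset.sum_const, nsmul_eq_mul]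
      _ ≤ (m : ℚ) * ((m : ℚ))⁻¹ := by
          have hFc : (Fs.card : ℚ) ≤ (m : ℚ) := by
            have : Fs.card ≤ m := by
              rw [hFsdef, ← Set.ncard_eq_toFinset_card F hFfin]; exact hFcard
            exact_mod_cast this
          have : (0:ℚ) ≤ ((m:ℚ))⁻¹ := inv_nonneg.mpr (Nat.cast_nonneg m)
          exact mul_le_mul_of_nonneg_right hFc this
      _ = 1 := mul_inv_cancel₀ (by exact_mod_cast hm.ne')
  rw [hsum] at key
  linarith
end

section
/- Let a group G act on a set U, let 𝓕 be a G-invariant family of finite subsets of U each of cardinality at most m, and let X be a finite system of representatives for 𝓕 (i.e., X ∩ F ≠ ∅ for all F ∈ 𝓕). Then for every F ∈ 𝓕 there exists f ∈ F such that the orbit Gf is finite and |Gf ∩ X| ≥ |Gf|/m. -/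
/-!
For `F ∈ 𝓕` and `x ∈ X ∩ G f` with `f ∈ F`, the elements `a` with `a • f = x` form a left coset of
the stabilizer of `f`. Since every translate `a • F` meets `X`, these finitely many cosets cover
`G`, so by B. H. Neumann's lemma the inverses of their indices sum to at least `1`. Grouping by
`f`, this sum is `∑_{f ∈ F} |G f ∩ X| / |G f|`, and as `|F| ≤ m` one of its terms is at least
`1 / m`.
-/

open scoped Pointwise

open MulAction

/-- Equals `0` when the orbit is infinite, since then `ncard` and division both return `0`. -/
noncomputable def orbitDensity (G : Type*) {U : Type*} [Group G] [MulAction G U]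
    (X : Set U) (f : U) : ℚ :=
  (orbit G f ∩ X).ncard / (orbit G f).ncard

section

variable {G U : Type*} [Group G] [MulAction G U]

theorem mem_smul_stabilizer_of_smul_eq {g a : G} {f : U} (h : g • f = a • f) :
    a ∈ g • (stabilizer G f : Set G) := by
  rw [mem_leftCoset_iff, SetLike.mem_coe, mem_stabilizer_iff, mul_smul, inv_smul_eq_iff, h]

theorem one_le_sum_orbitDensity (S : Finset U) {X : Set U} (hX : X.Finite)
    (hcover : ∀ a : G, ∃ f ∈ S, a • f ∈ X) :
    1 ≤ ∑ f ∈ S, orbitDensity G X f := by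
  classical
  set I := (S ×ˢ hX.toFinset).filter fun p => p.2 ∈ orbit G p.1
  choose! g hg using fun p (hp : p ∈ I) => mem_orbit_iff.1 (Finset.mem_filter.1 hp).2
  have hcosets : ⋃ p ∈ I, g p • (stabilizer G p.1 : Set G) = Set.univ := by
    refine Set.eq_univ_of_forall fun a => ?_
    obtain ⟨f, hfS, hfX⟩ := hcover a
    have hp : (f, a • f) ∈ I :=
      Finset.mem_filter.2 ⟨Finset.mem_product.2 ⟨hfS, hX.mem_toFinset.2 hfX⟩, a, rfl⟩
    exact Set.mem_biUnion hp (mem_smul_stabilizer_of_smul_eq (hg _ hp))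
  calc (1 : ℚ) ≤ ∑ p ∈ I, ((stabilizer G p.1).index : ℚ)⁻¹ :=
        Subgroup.one_le_sum_inv_index_of_leftCoset_cover hcosets
    _ = ∑ f ∈ S, orbitDensity G X f := by
        rw [Finset.sum_filter, Finset.sum_product]
        refine Finset.sum_congr rfl fun f _ => ?_
        have hinter : orbit G f ∩ X = ↑(hX.toFinset.filter (· ∈ orbit G f)) := by
          ext x
          simp [and_comm]
        rw [orbitDensity, hinter, Set.ncard_coe_finset, ← index_stabilizer, div_eq_mul_inv,
          Finset.card_filter, Nat.cast_sum, Finset.sum_mul]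
        simp only [Nat.cast_ite, Nat.cast_one, Nat.cast_zero, ite_mul, one_mul, zero_mul]

theorem orbit_finite_and_ncard_le_of_one_le_mul_orbitDensity {X : Set U} {f : U} {m : ℕ}
    (h : 1 ≤ m * orbitDensity G X f) :
    (orbit G f).Finite ∧ (orbit G f).ncard ≤ m * (orbit G f ∩ X).ncard := by
  have hne : (orbit G f).ncard ≠ 0 := by
    rintro h0
    norm_num [orbitDensity, h0] at h
  refine ⟨Set.finite_of_ncard_ne_zero hne, ?_⟩
  rw [orbitDensity, mul_div_assoc', le_div_iff₀ (by positivity), one_mul] at h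
  exact_mod_cast h

end

theorem Finset.exists_one_le_mul_of_one_le_sum {ι : Type*} {S : Finset ι} {r : ι → ℚ} {m : ℕ}
    (hS : S.card ≤ m) (hsum : 1 ≤ ∑ i ∈ S, r i) : ∃ i ∈ S, 1 ≤ m * r i := by
  have hne : S.Nonempty := Finset.nonempty_of_sum_ne_zero (f := r) (by linarith)
  have hm : (0 : ℚ) < m := by exact_mod_cast hne.card_pos.trans_le hS
  obtain ⟨i, hi, hle⟩ : ∃ i ∈ S, (m : ℚ)⁻¹ ≤ r i := by
    refine Finset.exists_le_of_sum_le hne (le_trans ?_ hsum)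
    rw [Finset.sum_const, nsmul_eq_mul, ← div_eq_mul_inv, div_le_one hm]
    exact_mod_cast hS
  exact ⟨i, hi, by rwa [← inv_mul_le_iff₀ hm, mul_one]⟩

/-- Let a group `G` act on a set `U`, let `𝓕` be a `G`-invariant family of finite subsets of
`U` each of cardinality at most `m`, and let `X` be a finite system of representatives for
`𝓕` (i.e. `X ∩ F ≠ ∅` for all `F ∈ 𝓕`). Then for every `F ∈ 𝓕` there exists `f ∈ F` such
that the orbit `Gf` is finite and `|Gf ∩ X| ≥ |Gf|/m`. -/
theorem exists_representable_point {G U : Type*} [Group G] [MulAction G U]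
    (𝓕 : Set (Set U)) (m : ℕ)
    (hF : ∀ F ∈ 𝓕, F.Finite ∧ F.ncard ≤ m)
    (hinv : ∀ g : G, ∀ F ∈ 𝓕, g • F ∈ 𝓕)
    (X : Set U) (hXfin : X.Finite) (hX : ∀ F ∈ 𝓕, (X ∩ F).Nonempty) :
    ∀ F ∈ 𝓕, ∃ f ∈ F, (MulAction.orbit G f).Finite ∧
      (MulAction.orbit G f).ncard ≤ m * (MulAction.orbit G f ∩ X).ncard := by
  intro F hF𝓕
  obtain ⟨hFfin, hFcard⟩ := hF F hF𝓕
  have hcover : ∀ a : G, ∃ f ∈ hFfin.toFinset, a • f ∈ X := fun a => by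
    obtain ⟨_, hxX, f, hf, rfl⟩ := hX (a • F) (hinv a F hF𝓕)
    exact ⟨f, hFfin.mem_toFinset.2 hf, hxX⟩
  have hcard : hFfin.toFinset.card ≤ m := by rwa [← Set.ncard_eq_toFinset_card F hFfin]
  obtain ⟨f, hf, hdense⟩ := Finset.exists_one_le_mul_of_one_le_sum hcard
    (one_le_sum_orbitDensity hFfin.toFinset hXfin hcover)
  exact ⟨f, hFfin.mem_toFinset.1 hf, orbit_finite_and_ncard_le_of_one_le_mul_orbitDensity hdense⟩
end

section
/- Let Γ be a finite graph and K a finite graph with k vertices. If there is a set X of vertices of Γ such that every subgraph of Γ isomorphic to K contains a vertex of X, then there is a set Y of vertices of Γ, invariant under all automorphisms of Γ, such that every subgraph of Γ isomorphic to K contains a vertex of Y and |Y| ≤ k·|X|. -/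
open SimpleGraph

/-- The graph `D₅`: a triangle on vertices 0,1,2 with pendant vertices 3 (adjacent to 1)
and 4 (adjacent to 2). -/
def D5 : SimpleGraph (Fin 5) :=
  SimpleGraph.fromRel (fun a b =>
    (a, b) ∈ ({(0, 1), (1, 2), (0, 2), (1, 3), (2, 4)} : Set (Fin 5 × Fin 5)))

/-- `f` is an embedded copy of the graph `K` in the graph `Γ` (a subgraph isomorphic to `K`). -/
def IsCopy {W V : Type*} (K : SimpleGraph W) (Γ : SimpleGraph V) (f : W → V) : Prop :=
  Function.Injective f ∧ ∀ a b, K.Adj a b → Γ.Adj (f a) (f b)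

/-- `X` meets every subgraph of `Γ` isomorphic to `K`. -/
def IsTransversal {W V : Type*} (K : SimpleGraph W) (Γ : SimpleGraph V) (X : Set V) : Prop :=
  ∀ f : W → V, IsCopy K Γ f → ∃ a, f a ∈ X

/-- `X` is invariant under all automorphisms of `Γ`. -/
def GraphInvariant {V : Type*} (Γ : SimpleGraph V) (X : Set V) : Prop :=
  ∀ σ : Γ ≃g Γ, (fun v => σ v) '' X = X

/-- The vertex representability `Υ_v(K, Γ)`. -/
noncomputable def upsilon {W V : Type*} (K : SimpleGraph W) (Γ : SimpleGraph V) : ℕ :=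
  sInf {n | ∃ X : Set V, X.Finite ∧ X.ncard = n ∧ IsTransversal K Γ X}

/-- The symmetric vertex representability `Υ_v^sym(K, Γ)`. -/
noncomputable def upsilonSym {W V : Type*} (K : SimpleGraph W) (Γ : SimpleGraph V) : ℕ :=
  sInf {n | ∃ X : Set V, X.Finite ∧ X.ncard = n ∧ IsTransversal K Γ X ∧ GraphInvariant Γ X}

/-- The orbit of a vertex under the automorphism group of `Γ`. -/
def orb {V : Type*} (Γ : SimpleGraph V) (v : V) : Set V := {w | ∃ σ : Γ ≃g Γ, σ v = w}

/-- **Corollary 1.1.** Let `Γ` be a finite graph and `K` a finite graph with `k` vertices.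
If there is a set `X` of vertices of `Γ` such that every subgraph of `Γ` isomorphic to `K`
contains a vertex of `X`, then there is a set `Y` of vertices of `Γ`, invariant under all
automorphisms of `Γ`, such that every subgraph of `Γ` isomorphic to `K` contains a vertex
of `Y` and `|Y| ≤ k·|X|`. -/
theorem exists_invariant_transversal {V W : Type*} [Fintype V] [Fintype W]
    (Γ : SimpleGraph V) (K : SimpleGraph W) (k : ℕ) (hk : Fintype.card W = k)
    (X : Set V) (hX : IsTransversal K Γ X) :
    ∃ Y : Set V, GraphInvariant Γ Y ∧ IsTransversal K Γ Y ∧ Y.ncard ≤ k * X.ncard := by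
  classical
  -- The automorphism group is finite.
  haveI : Finite (Γ ≃g Γ) :=
    Finite.of_injective (fun σ : Γ ≃g Γ => (σ : V → V)) (fun a b h => DFunLike.coe_injective h)
  haveI : Fintype (Γ ≃g Γ) := Fintype.ofFinite _
  haveI : Nonempty (Γ ≃g Γ) := ⟨Iso.refl⟩
  -- W is nonempty, hence k ≥ 1
  haveI hW : Nonempty W := by
    by_contra h
    rw [not_nonempty_iff] at h
    obtain ⟨a, _⟩ := hX (fun a => (h.elim a)) ⟨fun a => (h.elim a), fun a => (h.elim a)⟩
    exact h.elim a
  have hk1 : 1 ≤ k := by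
    rw [← hk]
    exact Fintype.card_pos
  set G : ℕ := Fintype.card (Γ ≃g Γ) with hG
  have hGpos : 0 < G := Fintype.card_pos
  -- the counting function
  set c : V → ℕ := fun v => (Finset.univ.filter fun σ : Γ ≃g Γ => σ v ∈ X).card with hc
  -- c is invariant
  have hinv : ∀ (σ₀ : Γ ≃g Γ) (v : V), c (σ₀ v) = c v := by
    intro σ₀ v
    rw [hc]
    refine Finset.card_bij' (fun σ _ => σ₀.trans σ) (fun τ _ => σ₀.symm.trans τ) ?_ ?_ ?_ ?_
    · intro σ hσ
      simp only [Finset.mem_filter, Finset.mem_univ, true_and] at hσ ⊢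
      simpa using hσ
    · intro τ hτ
      simp only [Finset.mem_filter, Finset.mem_univ, true_and] at hτ ⊢
      simpa using hτ
    · intro σ _
      refine DFunLike.ext _ _ fun w => ?_
      exact congrArg σ (σ₀.apply_symm_apply w)
    · intro τ _
      refine DFunLike.ext _ _ fun w => ?_
      exact congrArg τ (σ₀.symm_apply_apply w)
  -- total count
  have htot : ∑ v : V, c v = G * X.ncard := by
    have : ∀ σ : Γ ≃g Γ, (Finset.univ.filter fun v : V => σ v ∈ X).card = X.ncard := by
      intro σ
      rw [Set.ncard_eq_toFinset_card' X]
      apply Finset.card_bij' (fun v _ => σ v) (fun w _ => σ.symm w)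
      · intro v hv
        simp only [Finset.mem_filter, Finset.mem_univ, true_and] at hv
        simpa using hv
      · intro w hw
        simp only [Set.mem_toFinset] at hw
        simpa using hw
      · intro v _; exact σ.symm_apply_apply v
      · intro w _; exact σ.apply_symm_apply w
    calc ∑ v : V, c v = ∑ v : V, ∑ σ : Γ ≃g Γ, if σ v ∈ X then 1 else 0 := by
          exact Finset.sum_congr rfl fun v _ => Finset.card_filter _ _
      _ = ∑ σ : Γ ≃g Γ, ∑ v : V, if σ v ∈ X then 1 else 0 := Finset.sum_comm
      _ = ∑ σ : Γ ≃g Γ, (Finset.univ.filter fun v : V => σ v ∈ X).card := by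
          exact Finset.sum_congr rfl fun σ _ => (Finset.card_filter _ _).symm
      _ = ∑ _σ : Γ ≃g Γ, X.ncard := by
          exact Finset.sum_congr rfl fun σ _ => this σ
      _ = G * X.ncard := by simp [hG, mul_comm]
  -- the invariant transversal
  set Yf : Finset V := Finset.univ.filter (fun v => G ≤ k * c v) with hYf
  refine ⟨(Yf : Set V), ?_, ?_, ?_⟩
  · -- invariance
    intro σ
    ext w
    simp only [Set.mem_image, Finset.coe_filter, Set.mem_setOf_eq, Finset.mem_univ, true_and,
      Finset.mem_coe, hYf, Finset.mem_filter]
    constructor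
    · rintro ⟨v, hv, rfl⟩
      rwa [hinv σ v]
    · intro hw
      refine ⟨σ.symm w, ?_, by simp⟩
      rw [hinv σ.symm w]
      exact hw
  · -- transversal
    intro f hf
    -- for each σ, σ ∘ f is a copy
    have key : ∀ σ : Γ ≃g Γ, ∃ a, σ (f a) ∈ X := by
      intro σ
      apply hX (fun a => σ (f a))
      exact ⟨fun a b h => hf.1 (σ.injective h), fun a b h => σ.map_adj_iff.mpr (hf.2 a b h)⟩
    choose g hg using key
    -- G ≤ ∑_a c (f a)
    have hsum : G ≤ ∑ a : W, c (f a) := by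
      have hsub : (Finset.univ : Finset (Γ ≃g Γ)) ⊆
          Finset.univ.biUnion (fun a : W => Finset.univ.filter fun σ : Γ ≃g Γ => σ (f a) ∈ X) := by
        intro σ _
        simp only [Finset.mem_biUnion, Finset.mem_univ, true_and, Finset.mem_filter]
        exact ⟨g σ, hg σ⟩
      calc G = (Finset.univ : Finset (Γ ≃g Γ)).card := rfl
        _ ≤ _ := Finset.card_le_card hsub
        _ ≤ ∑ a : W, c (f a) := Finset.card_biUnion_le
    by_contra hcon
    push_neg at hcon
    have hlt : ∀ a : W, k * c (f a) < G := by
      intro a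
      by_contra h
      push_neg at h
      exact absurd (by simp [hYf, h] : f a ∈ (Yf : Set V)) (by simpa using fun h' => hcon a h')
    have : k * G < k * G := by
      calc k * G ≤ k * ∑ a : W, c (f a) := Nat.mul_le_mul_left k hsum
        _ = ∑ a : W, k * c (f a) := Finset.mul_sum _ _ _
        _ ≤ ∑ _a : W, (G - 1) := Finset.sum_le_sum fun a _ => Nat.le_sub_one_of_lt (hlt a)
        _ = k * (G - 1) := by simp [hk, mul_comm]
        _ < k * G := Nat.mul_lt_mul_of_pos_left (Nat.sub_lt hGpos one_pos) hk1
    exact absurd this (lt_irrefl _)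
  · -- cardinality bound
    rw [Set.ncard_coe_finset]
    have h1 : Yf.card * G ≤ ∑ v ∈ Yf, k * c v := by
      calc Yf.card * G = ∑ _v ∈ Yf, G := by simp [mul_comm]
        _ ≤ ∑ v ∈ Yf, k * c v := Finset.sum_le_sum fun v hv => by
            simp only [hYf, Finset.mem_filter] at hv; exact hv.2
    have h2 : ∑ v ∈ Yf, k * c v ≤ k * (G * X.ncard) := by
      calc ∑ v ∈ Yf, k * c v ≤ ∑ v : V, k * c v :=
            Finset.sum_le_sum_of_subset (Finset.subset_univ Yf)
        _ = k * ∑ v : V, c v := (Finset.mul_sum _ _ _).symm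
        _ = k * (G * X.ncard) := by rw [htot]
    have := h1.trans h2
    have hfin : Yf.card * G ≤ (k * X.ncard) * G := by
      calc Yf.card * G ≤ k * (G * X.ncard) := this
        _ = (k * X.ncard) * G := by ring
    exact Nat.le_of_mul_le_mul_right hfin hGpos
end

section
/- Let Γ be a finite graph with vertex orbits A and B under Aut(Γ) such that some edge joins A to B, and let S₁ ⊆ A. Let S₂ ⊆ B be the set of vertices of B adjacent to at least one vertex of S₁. Then |S₂| ≥ |S₁|·|B|/|A|. -/
open SimpleGraph

/-- **Lemma 2.2.** Let `Γ` be a finite graph with vertex orbits `A` and `B` under `Aut(Γ)`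
such that some edge joins `A` to `B`, and let `S₁ ⊆ A`. Let `S₂ ⊆ B` be the set of
vertices of `B` adjacent to at least one vertex of `S₁`. Then `|S₂| ≥ |S₁|·|B|/|A|`,
i.e. `|S₂|·|A| ≥ |S₁|·|B|`. -/
theorem card_neighbors_orbit_ge {V : Type*} [Fintype V] (Γ : SimpleGraph V) (A B : Set V)
    (hA : ∃ v, A = orb Γ v) (hB : ∃ v, B = orb Γ v)
    (hedge : ∃ a ∈ A, ∃ b ∈ B, Γ.Adj a b)
    (S₁ : Set V) (hS₁ : S₁ ⊆ A) :
    S₁.ncard * B.ncard ≤ {b ∈ B | ∃ a ∈ S₁, Γ.Adj a b}.ncard * A.ncard := by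
  classical
  obtain ⟨a₀, ha₀, b₀, hb₀, hab₀⟩ := hedge
  have hinv : ∀ (X : Set V), (∃ v, X = orb Γ v) → ∀ (σ : Γ ≃g Γ) (x : V), x ∈ X ↔ σ x ∈ X := by
    rintro X ⟨v, rfl⟩ σ x
    constructor
    · rintro ⟨τ, rfl⟩
      exact ⟨τ.trans σ, rfl⟩
    · rintro ⟨τ, hτ⟩
      refine ⟨τ.trans σ.symm, ?_⟩
      simp [RelIso.trans_apply, hτ]
  have htrans : ∀ (X : Set V), (∃ v, X = orb Γ v) → ∀ x ∈ X, ∀ y ∈ X, ∃ σ : Γ ≃g Γ, σ x = y := by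
    rintro X ⟨v, rfl⟩ x ⟨τ₁, rfl⟩ y ⟨τ₂, rfl⟩
    exact ⟨τ₁.symm.trans τ₂, by simp⟩
  -- constancy of degree into an invariant set
  have hcard : ∀ (X : Set V), (∀ (σ : Γ ≃g Γ) (z : V), z ∈ X ↔ σ z ∈ X) →
      ∀ (σ : Γ ≃g Γ) (x : V),
      (X.toFinset.filter (fun b => Γ.Adj x b)).card
        = (X.toFinset.filter (fun b => Γ.Adj (σ x) b)).card := by
    intro X hX σ x
    refine Finset.card_nbij' (fun b => σ b) (fun b => σ.symm b) ?_ ?_ ?_ ?_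
    · intro b hb
      simp only [Finset.mem_coe, Finset.mem_filter, Set.mem_toFinset] at hb ⊢
      exact ⟨(hX σ b).1 hb.1, σ.map_rel_iff.2 hb.2⟩
    · intro b hb
      simp only [Finset.mem_coe, Finset.mem_filter, Set.mem_toFinset] at hb ⊢
      refine ⟨?_, ?_⟩
      · have := (hX σ (σ.symm b)).2
        simp only [RelIso.apply_symm_apply] at this
        exact this hb.1
      · have : Γ.Adj (σ x) (σ (σ.symm b)) := by simpa using hb.2
        exact σ.map_rel_iff.1 this
    · intro b _; simp
    · intro b _; simp
  set k := (B.toFinset.filter (fun b => Γ.Adj a₀ b)).card with hk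
  set l := (A.toFinset.filter (fun a => Γ.Adj b₀ a)).card with hl
  have hkA : ∀ a ∈ A, (B.toFinset.filter (fun b => Γ.Adj a b)).card = k := by
    intro a ha
    obtain ⟨σ, hσ⟩ := htrans A hA a₀ ha₀ a ha
    rw [hk, hcard B (hinv B hB) σ a₀, hσ]
  have hlB : ∀ b ∈ B, (A.toFinset.filter (fun a => Γ.Adj b a)).card = l := by
    intro b hb
    obtain ⟨σ, hσ⟩ := htrans B hB b₀ hb₀ b hb
    rw [hl, hcard A (hinv A hA) σ b₀, hσ]
  have hkpos : 0 < k := by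
    rw [hk]
    refine Finset.card_pos.2 ⟨b₀, ?_⟩
    simp [Set.mem_toFinset, hb₀, hab₀]
  -- double counting swap
  have hswap : ∀ (s t : Finset V),
      ∑ a ∈ s, (t.filter (fun b => Γ.Adj a b)).card
        = ∑ b ∈ t, (s.filter (fun a => Γ.Adj a b)).card := by
    intro s t
    simp only [Finset.card_filter]
    exact Finset.sum_comm
  -- k * |A| = l * |B|
  have hAB : A.toFinset.card * k = B.toFinset.card * l := by
    have h1 : ∑ a ∈ A.toFinset, (B.toFinset.filter (fun b => Γ.Adj a b)).card
        = A.toFinset.card * k := by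
      rw [Finset.sum_congr rfl (fun a ha => hkA a (Set.mem_toFinset.1 ha))]
      simp [Finset.sum_const, Nat.mul_comm]
    have h2 : ∑ b ∈ B.toFinset, (A.toFinset.filter (fun a => Γ.Adj a b)).card
        = B.toFinset.card * l := by
      have : ∀ b ∈ B.toFinset, (A.toFinset.filter (fun a => Γ.Adj a b)).card = l := by
        intro b hb
        rw [← hlB b (Set.mem_toFinset.1 hb)]
        congr 1
        ext a
        simp [Γ.adj_comm]
      rw [Finset.sum_congr rfl this]
      simp [Finset.sum_const, Nat.mul_comm]
    rw [← h1, ← h2, hswap]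
  set S₂ : Set V := {b ∈ B | ∃ a ∈ S₁, Γ.Adj a b} with hS₂
  have hS₂B : S₂ ⊆ B := fun b hb => hb.1
  -- k * |S₁| ≤ l * |S₂|
  have hmain : S₁.toFinset.card * k ≤ S₂.toFinset.card * l := by
    have h1 : ∑ a ∈ S₁.toFinset, (B.toFinset.filter (fun b => Γ.Adj a b)).card
        = S₁.toFinset.card * k := by
      rw [Finset.sum_congr rfl (fun a ha => hkA a (hS₁ (Set.mem_toFinset.1 ha)))]
      simp [Finset.sum_const, Nat.mul_comm]
    rw [← h1, hswap]
    have hzero : ∀ b ∈ B.toFinset, b ∉ S₂.toFinset →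
        (S₁.toFinset.filter (fun a => Γ.Adj a b)).card = 0 := by
      intro b hb hb2
      rw [Finset.card_eq_zero, Finset.filter_eq_empty_iff]
      intro a ha hadj
      exact hb2 (Set.mem_toFinset.2 ⟨Set.mem_toFinset.1 hb, a, Set.mem_toFinset.1 ha, hadj⟩)
    have hsub : S₂.toFinset ⊆ B.toFinset := by
      intro b hb
      exact Set.mem_toFinset.2 (hS₂B (Set.mem_toFinset.1 hb))
    rw [← Finset.sum_subset hsub (fun b hb hb2 => hzero b hb hb2)]
    calc ∑ b ∈ S₂.toFinset, (S₁.toFinset.filter (fun a => Γ.Adj a b)).card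
        ≤ ∑ b ∈ S₂.toFinset, l := by
          refine Finset.sum_le_sum ?_
          intro b hb
          have hbB := hS₂B (Set.mem_toFinset.1 hb)
          rw [← hlB b hbB]
          refine Finset.card_le_card ?_
          intro a ha
          simp only [Finset.mem_filter, Set.mem_toFinset] at ha ⊢
          exact ⟨hS₁ ha.1, (Γ.adj_comm _ _).1 ha.2⟩
      _ = S₂.toFinset.card * l := by simp [Finset.sum_const]
  -- conclude
  have hfin : k * (S₁.toFinset.card * B.toFinset.card) ≤ k * (S₂.toFinset.card * A.toFinset.card) := by
    calc k * (S₁.toFinset.card * B.toFinset.card)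
        = (S₁.toFinset.card * k) * B.toFinset.card := by ring
      _ ≤ (S₂.toFinset.card * l) * B.toFinset.card := Nat.mul_le_mul_right _ hmain
      _ = S₂.toFinset.card * (B.toFinset.card * l) := by ring
      _ = S₂.toFinset.card * (A.toFinset.card * k) := by rw [hAB]
      _ = k * (S₂.toFinset.card * A.toFinset.card) := by ring
  have := Nat.le_of_mul_le_mul_left hfin hkpos
  rw [Set.ncard_eq_toFinset_card' S₁, Set.ncard_eq_toFinset_card' B,
    Set.ncard_eq_toFinset_card' A]
  rwa [Set.ncard_eq_toFinset_card' S₂]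
end

section
/- Let Γ be a finite graph, let X be a minimum vertex set meeting every embedded copy of D₅ in Γ, and suppose 5·|X| equals the minimal size of an Aut(Γ)-invariant such set. Then for every orbit A of Aut(Γ), either A ∩ X = ∅ or |A ∩ X| = |A|/5; moreover, the invariant set Y obtained from Theorem 1.1 is the union of those orbits A with |A ∩ X| ≥ |A|/5. -/
open SimpleGraph

/-! Let `Y = {y | |Orb y| ≤ 5 |Orb y ∩ X|}`. If a copy `f` of `D₅` missed `Y`, a uniformly
random automorphism `σ` would send each `f i` into `X` with probability
`|Orb (f i) ∩ X| / |Orb (f i)| < 1/5`, so the copy `σ ∘ f` would miss `X` for some `σ`. Hence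
`Y` is an invariant transversal and `5 |X| ≤ |Y|`. Summing `|A| ≤ 5 |A ∩ X|` over the orbits
`A ⊆ Y` gives `|Y| ≤ 5 |X ∩ Y| ≤ 5 |X|`, so all these inequalities are equalities: `X ⊆ Y`, and
`|A| = 5 |A ∩ X|` for every orbit in `Y`, in particular for every orbit meeting `X`. -/

namespace MulAction

open Finset

variable (G : Type*) {α : Type*} [Group G] [MulAction G α]

def orbitHeavy (k : ℕ) (X : Set α) : Set α :=
  {y | (orbit G y).ncard ≤ k * (orbit G y ∩ X).ncard}

variable {G} {k : ℕ} {X : Set α}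

lemma mem_orbitHeavy_iff_of_mem_orbit {y v : α} (h : y ∈ orbit G v) :
    y ∈ orbitHeavy G k X ↔ v ∈ orbitHeavy G k X := by
  simp only [orbitHeavy, Set.mem_ofPred_eq, orbit_eq_iff.2 h]

lemma biUnion_orbit_orbitHeavy : ⋃ v ∈ orbitHeavy G k X, orbit G v = orbitHeavy G k X := by
  ext y
  simp only [Set.mem_iUnion, exists_prop]
  exact ⟨fun ⟨_, hv, hy⟩ => (mem_orbitHeavy_iff_of_mem_orbit hy).2 hv,
    fun hy => ⟨y, hy, mem_orbit_self y⟩⟩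

section Counting

open scoped Classical

variable [Fintype G]

lemma card_filter_smul_eq_of_mem_orbit {a b : α} (h : b ∈ orbit G a) :
    #{g : G | g • a = b} = #{g : G | g • a = a} := by
  obtain ⟨τ, rfl⟩ := h
  refine card_nbij' (τ⁻¹ * ·) (τ * ·) ?_ ?_ (fun _ _ => by simp) (fun _ _ => by simp) <;>
    intro g hg <;> simp_all [mul_smul]

lemma card_filter_smul_mem (a : α) (s : Set α) :
    #{g : G | g • a ∈ s} = (orbit G a ∩ s).ncard * #{g : G | g • a = a} := by
  set t := (univ.filter fun g : G => g • a ∈ s).image (· • a)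
  have ht : (t : Set α) = orbit G a ∩ s := by
    ext b
    simp only [t, coe_image, coe_filter, mem_univ, true_and, Set.mem_image, Set.mem_ofPred_eq]
    constructor
    · rintro ⟨g, hg, rfl⟩
      exact ⟨⟨g, rfl⟩, hg⟩
    · rintro ⟨⟨g, rfl⟩, hg⟩
      exact ⟨g, hg, rfl⟩
  rw [card_eq_sum_card_fiberwise (f := (· • a)) (t := t) fun g hg => mem_image_of_mem _ hg,
    ← ht, Set.ncard_coe_finset, ← smul_eq_mul, ← sum_const]
  refine sum_congr rfl fun b hb => ?_
  have hb' : b ∈ orbit G a ∩ s := ht ▸ hb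
  rw [filter_filter, ← card_filter_smul_eq_of_mem_orbit hb'.1]
  congr 1
  ext g
  simp only [mem_filter, mem_univ, true_and, and_iff_right_iff_imp]
  exact fun h => h ▸ hb'.2

lemma card_eq_ncard_orbit_mul (a : α) :
    Fintype.card G = (orbit G a).ncard * #{g : G | g • a = a} := by
  simpa using card_filter_smul_mem (G := G) a Set.univ

lemma exists_mem_orbitHeavy {ι : Type*} [Fintype ι] (p : ι → α) (X : Set α)
    (hX : ∀ g : G, ∃ i, g • p i ∈ X) : ∃ i, p i ∈ orbitHeavy G (Fintype.card ι) X := by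
  by_contra! hlight
  simp only [orbitHeavy, Set.mem_ofPred_eq, not_le] at hlight
  have hι : (univ : Finset ι).Nonempty := let ⟨i, _⟩ := hX 1; ⟨i, mem_univ i⟩
  have hcover : Fintype.card G ≤ ∑ i, #{g : G | g • p i ∈ X} := by
    calc Fintype.card G = #(univ.biUnion fun i => {g : G | g • p i ∈ X}) := by
          rw [← card_univ]; congr; ext g; simpa using hX g
      _ ≤ _ := card_biUnion_le
  have hlt : ∀ i, Fintype.card ι * #{g : G | g • p i ∈ X} < Fintype.card G := fun i => by
    rw [card_filter_smul_mem, card_eq_ncard_orbit_mul (G := G) (p i), ← mul_assoc]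
    exact Nat.mul_lt_mul_of_pos_right (hlight i) (card_pos.2 ⟨1, by simp⟩)
  have := calc Fintype.card ι * Fintype.card G
      ≤ ∑ i, Fintype.card ι * #{g : G | g • p i ∈ X} := by rw [← Finset.mul_sum]; gcongr
    _ < ∑ _i : ι, Fintype.card G := sum_lt_sum_of_nonempty hι fun i _ => hlt i
    _ = Fintype.card ι * Fintype.card G := by simp
  exact lt_irrefl _ this

end Counting

section Decomposition

open scoped Classical

variable [Fintype α]

lemma ncard_inter_eq_sum_orbits {S : Set α}
    (hS : ∀ ⦃y v : α⦄, y ∈ orbit G v → v ∈ S → y ∈ S) (X : Set α) :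
    (S ∩ X).ncard = ∑ A ∈ ({y | y ∈ S} : Finset α).image (orbit G), (A ∩ X).ncard := by
  have hcard : (S ∩ X).ncard = #({y | y ∈ S ∩ X} : Finset α) := by
    rw [← Set.ncard_coe_finset]; simp
  rw [hcard, card_eq_sum_card_fiberwise (f := orbit G)
    (t := ({y | y ∈ S} : Finset α).image (orbit G)) fun y hy => mem_image_of_mem _ (by simp_all)]
  refine sum_congr rfl fun A hA => ?_
  obtain ⟨v, hv, rfl⟩ := mem_image.1 hA
  rw [← Set.ncard_coe_finset]
  congr 1
  ext y
  simp only [coe_filter, mem_filter, mem_univ, true_and, Set.mem_inter_iff, Set.mem_ofPred_eq,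
    orbit_eq_iff]
  exact ⟨fun ⟨⟨_, hX⟩, hy⟩ => ⟨hy, hX⟩, fun ⟨hy, hX⟩ => ⟨⟨hS hy (by simpa using hv), hX⟩, hy⟩⟩

lemma subset_orbitHeavy_and_ncard_orbit_eq_of_le (hk : 0 < k)
    (h : k * X.ncard ≤ (orbitHeavy G k X).ncard) :
    X ⊆ orbitHeavy G k X ∧
      ∀ y ∈ orbitHeavy G k X, (orbit G y).ncard = k * (orbit G y ∩ X).ncard := by
  set H := orbitHeavy G k X
  set O := ({y | y ∈ H} : Finset α).image (orbit G)
  have hclosed : ∀ ⦃y v : α⦄, y ∈ orbit G v → v ∈ H → y ∈ H :=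
    fun _ _ hy => (mem_orbitHeavy_iff_of_mem_orbit hy).2
  have hH : H.ncard = ∑ A ∈ O, A.ncard := by
    simpa using ncard_inter_eq_sum_orbits hclosed Set.univ
  have hHX : (H ∩ X).ncard = ∑ A ∈ O, (A ∩ X).ncard := ncard_inter_eq_sum_orbits hclosed X
  have hO : ∀ A ∈ O, A.ncard ≤ k * (A ∩ X).ncard := by
    simp only [O, mem_image, mem_filter, mem_univ, true_and]
    rintro _ ⟨y, hy, rfl⟩
    exact hy
  have hXH : (H ∩ X).ncard ≤ X.ncard := Set.ncard_le_ncard Set.inter_subset_right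
  have hsum : ∑ A ∈ O, A.ncard ≤ k * (H ∩ X).ncard := by
    rw [hHX, Finset.mul_sum]; exact sum_le_sum hO
  constructor
  · have : X.ncard ≤ (H ∩ X).ncard := Nat.le_of_mul_le_mul_left (by omega) hk
    intro x hx
    rw [← Set.eq_of_subset_of_ncard_le Set.inter_subset_right this] at hx
    exact hx.1
  · intro y hy
    have heq : ∑ A ∈ O, A.ncard = ∑ A ∈ O, k * (A ∩ X).ncard := by
      rw [← Finset.mul_sum, ← hHX]
      have := Nat.mul_le_mul_left k hXH
      omega
    exact (sum_eq_sum_iff_of_le hO).1 heq _ (mem_image_of_mem _ (by simpa using hy))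

end Decomposition

end MulAction

open MulAction

section Graph

variable {V W : Type*} {Γ : SimpleGraph V}

instance [Finite V] : Finite (Γ ≃g Γ) := DFunLike.finite _

lemma orb_eq_orbit (v : V) : orb Γ v = orbit (Γ ≃g Γ) v := rfl

lemma IsCopy.iso_comp {K : SimpleGraph W} {f : W → V} (hf : IsCopy K Γ f) (σ : Γ ≃g Γ) :
    IsCopy K Γ (σ ∘ f) :=
  ⟨σ.injective.comp hf.1, fun a b hab => σ.map_adj_iff.2 (hf.2 a b hab)⟩

lemma IsTransversal.orbitHeavy [Finite V] [Fintype W] {K : SimpleGraph W} {X : Set V}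
    (hX : IsTransversal K Γ X) :
    IsTransversal K Γ (orbitHeavy (Γ ≃g Γ) (Fintype.card W) X) := fun f hf =>
  have := Fintype.ofFinite (Γ ≃g Γ)
  exists_mem_orbitHeavy f X fun σ => hX _ (hf.iso_comp σ)

lemma graphInvariant_orbitHeavy (k : ℕ) (X : Set V) :
    GraphInvariant Γ (orbitHeavy (Γ ≃g Γ) k X) := by
  intro σ
  ext v
  exact ⟨fun ⟨w, hw, hv⟩ => hv ▸ (mem_orbitHeavy_iff_of_mem_orbit ⟨σ, rfl⟩).2 hw,
    fun hv => ⟨σ.symm v, (mem_orbitHeavy_iff_of_mem_orbit ⟨σ, σ.apply_symm_apply v⟩).1 hv,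
      σ.apply_symm_apply v⟩⟩

end Graph

theorem orbit_intersection_dichotomy_general {V : Type*} [Fintype V] (Γ : SimpleGraph V)
    (X : Set V) (hX : IsTransversal D5 Γ X)
    (hsym : upsilonSym D5 Γ = 5 * X.ncard) :
    (∀ v : V, orb Γ v ∩ X = ∅ ∨ 5 * (orb Γ v ∩ X).ncard = (orb Γ v).ncard) ∧
    {y : V | (orb Γ y).ncard ≤ 5 * (orb Γ y ∩ X).ncard} =
      ⋃ v ∈ {v : V | (orb Γ v).ncard ≤ 5 * (orb Γ v ∩ X).ncard}, orb Γ v := by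
  simp only [orb_eq_orbit]
  set Y := orbitHeavy (Γ ≃g Γ) 5 X
  have hYtransversal : IsTransversal D5 Γ Y := by simpa using hX.orbitHeavy
  have hY : 5 * X.ncard ≤ Y.ncard :=
    hsym ▸ Nat.sInf_le ⟨Y, Set.toFinite Y, rfl, hYtransversal, graphInvariant_orbitHeavy 5 X⟩
  obtain ⟨hXY, hYeq⟩ := subset_orbitHeavy_and_ncard_orbit_eq_of_le (by norm_num) hY
  refine ⟨fun v => ?_, biUnion_orbit_orbitHeavy.symm⟩
  rcases (orbit (Γ ≃g Γ) v ∩ X).eq_empty_or_nonempty with h | ⟨x, hxv, hxX⟩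
  · exact .inl h
  · exact .inr (hYeq v ((mem_orbitHeavy_iff_of_mem_orbit hxv).1 (hXY hxX))).symm

/-- Let `Γ` be a finite graph, let `X` be a minimum vertex set meeting every embedded copy
of `D₅` in `Γ`, and suppose `5·|X|` equals the minimal size of an `Aut(Γ)`-invariant such
set. Then for every orbit `A` of `Aut(Γ)`, either `A ∩ X = ∅` or `|A ∩ X| = |A|/5`;
moreover the invariant set `Y` of Theorem 1.1, namely
`Y = {y | |Orb(y) ∩ X| ≥ |Orb(y)|/5}`, is the union of those orbits `A` with
`|A ∩ X| ≥ |A|/5`. -/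
theorem orbit_intersection_dichotomy {V : Type*} [Fintype V] (Γ : SimpleGraph V)
    (X : Set V) (hX : IsTransversal D5 Γ X) (hmin : X.ncard = upsilon D5 Γ)
    (hsym : upsilonSym D5 Γ = 5 * X.ncard) :
    (∀ v : V, orb Γ v ∩ X = ∅ ∨ 5 * (orb Γ v ∩ X).ncard = (orb Γ v).ncard) ∧
    {y : V | (orb Γ y).ncard ≤ 5 * (orb Γ y ∩ X).ncard} =
      ⋃ v ∈ {v : V | (orb Γ v).ncard ≤ 5 * (orb Γ v ∩ X).ncard}, orb Γ v :=
  orbit_intersection_dichotomy_general Γ X hX hsym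
end

section
/- Let Γ be a finite graph with a vertex orbit A under Aut(Γ), and suppose the equality 5·Υ_v(D₅,Γ) = Υ_v^{sym}(D₅,Γ) > 0 holds. If A intersects some embedded copy of D₅ in Γ (i.e., some subgraph of Γ isomorphic to D₅ has a vertex in A), then every minimum transversal X of the copies of D₅ satisfies |A ∩ X| = |A|/5; if no copy of D₅ meets A, then |A ∩ X| = 0. -/
open SimpleGraph

section Aux

open Classical Finset

variable {V : Type*} [Fintype V]

noncomputable instance autFintype (Γ : SimpleGraph V) : Fintype (Γ ≃g Γ) :=
  Fintype.ofInjective (fun σ : Γ ≃g Γ => (σ : V → V)) DFunLike.coe_injective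

/-- The number of automorphisms sending `u` into `X`. -/
noncomputable def Ncnt (Γ : SimpleGraph V) (X : Set V) (u : V) : ℕ :=
  (Finset.univ.filter (fun σ : Γ ≃g Γ => σ u ∈ X)).card

lemma Ncnt_iso (Γ : SimpleGraph V) (X : Set V) (σ : Γ ≃g Γ) (u : V) :
    Ncnt Γ X (σ u) = Ncnt Γ X u := by
  unfold Ncnt
  refine Finset.card_bij' (fun τ _ => σ.trans τ) (fun ρ _ => σ.symm.trans ρ) ?_ ?_ ?_ ?_
  · intro τ hτ
    simp only [Finset.mem_filter, Finset.mem_univ, true_and] at hτ ⊢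
    simpa using hτ
  · intro ρ hρ
    simp only [Finset.mem_filter, Finset.mem_univ, true_and] at hρ ⊢
    simpa using hρ
  · intro τ _; exact DFunLike.ext _ _ (fun x => by simp)
  · intro ρ _; exact DFunLike.ext _ _ (fun x => by simp)

lemma copy_comp (Γ : SimpleGraph V) {f : Fin 5 → V} (hf : IsCopy D5 Γ f) (σ : Γ ≃g Γ) :
    IsCopy D5 Γ (fun a => σ (f a)) := by
  refine ⟨fun a b hab => hf.1 (σ.toEquiv.injective hab), fun a b hab => ?_⟩
  exact σ.map_adj_iff.mpr (hf.2 a b hab)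

lemma copy_sum (Γ : SimpleGraph V) (X : Set V) (hX : IsTransversal D5 Γ X)
    {f : Fin 5 → V} (hf : IsCopy D5 Γ f) :
    Fintype.card (Γ ≃g Γ) ≤ ∑ a : Fin 5, Ncnt Γ X (f a) := by
  have key : ∀ σ : Γ ≃g Γ, ∃ a, σ (f a) ∈ X := fun σ => hX _ (copy_comp Γ hf σ)
  calc Fintype.card (Γ ≃g Γ) = ∑ _σ : Γ ≃g Γ, 1 := by simp
    _ ≤ ∑ σ : Γ ≃g Γ, ∑ a : Fin 5, (if σ (f a) ∈ X then 1 else 0) := by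
        refine Finset.sum_le_sum (fun σ _ => ?_)
        obtain ⟨a, ha⟩ := key σ
        calc (1 : ℕ) = if σ (f a) ∈ X then 1 else 0 := by rw [if_pos ha]
          _ ≤ _ := Finset.single_le_sum (f := fun a => if σ (f a) ∈ X then 1 else 0)
              (fun _ _ => Nat.zero_le _) (Finset.mem_univ a)
    _ = ∑ a : Fin 5, ∑ σ : Γ ≃g Γ, (if σ (f a) ∈ X then 1 else 0) := Finset.sum_comm
    _ = ∑ a : Fin 5, Ncnt Γ X (f a) := by
        refine Finset.sum_congr rfl (fun a _ => ?_)
        rw [Ncnt, Finset.card_filter]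

lemma total_sum (Γ : SimpleGraph V) (X : Set V) :
    ∑ u : V, Ncnt Γ X u = Fintype.card (Γ ≃g Γ) * X.ncard := by
  have : ∑ u : V, Ncnt Γ X u
      = ∑ σ : Γ ≃g Γ, (Finset.univ.filter (fun u : V => σ u ∈ X)).card := by
    simp only [Ncnt, Finset.card_filter]
    exact Finset.sum_comm
  rw [this]
  have hcard : ∀ σ : Γ ≃g Γ, (Finset.univ.filter (fun u : V => σ u ∈ X)).card
      = X.toFinset.card := by
    intro σ
    refine Finset.card_nbij (fun u => σ u) ?_ ?_ ?_
    · intro u hu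
      exact Set.mem_toFinset.mpr (Finset.mem_filter.mp hu).2
    · exact σ.toEquiv.injective.injOn
    · intro x hx
      simp only [Finset.coe_filter, Set.mem_setOf_eq, Set.mem_image] at hx ⊢
      exact ⟨σ.symm x, ⟨Finset.mem_univ _, by simpa using Set.mem_toFinset.mp hx⟩, by simp⟩
  rw [Finset.sum_congr rfl (fun σ _ => hcard σ), Finset.sum_const, Finset.card_univ,
    smul_eq_mul, Set.ncard_eq_toFinset_card']

lemma orb_eq_of_mem (Γ : SimpleGraph V) {v w : V} (h : w ∈ orb Γ v) :
    orb Γ w = orb Γ v := by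
  obtain ⟨τ, rfl⟩ := h
  ext x
  constructor
  · rintro ⟨σ, rfl⟩; exact ⟨τ.trans σ, by simp⟩
  · rintro ⟨σ, rfl⟩; exact ⟨τ.symm.trans σ, by simp⟩

lemma orbit_count (Γ : SimpleGraph V) (X : Set V) (u : V) :
    Ncnt Γ X u * (orb Γ u).ncard = Fintype.card (Γ ≃g Γ) * (orb Γ u ∩ X).ncard := by
  set c : V → ℕ := fun w => (Finset.univ.filter (fun σ : Γ ≃g Γ => σ u = w)).card with hc
  have hconst : ∀ w ∈ orb Γ u, c w = c u := by
    rintro w ⟨τ, rfl⟩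
    refine Finset.card_bij' (fun ρ _ => ρ.trans τ.symm) (fun ρ _ => ρ.trans τ) ?_ ?_ ?_ ?_
    · intro ρ hρ
      simp only [Finset.mem_filter, Finset.mem_univ, true_and] at hρ ⊢
      simp [hρ]
    · intro ρ hρ
      simp only [Finset.mem_filter, Finset.mem_univ, true_and] at hρ ⊢
      simp [hρ]
    · intro ρ _; exact DFunLike.ext _ _ (fun x => by simp)
    · intro ρ _; exact DFunLike.ext _ _ (fun x => by simp)
  have h1 : Fintype.card (Γ ≃g Γ) = (orb Γ u).toFinset.card * c u := by
    have := Finset.card_eq_sum_card_fiberwise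
      (f := fun σ : Γ ≃g Γ => σ u) (s := Finset.univ) (t := (orb Γ u).toFinset)
      (fun σ _ => Set.mem_toFinset.mpr ⟨σ, rfl⟩)
    rw [Finset.card_univ] at this
    rw [this, Finset.sum_congr rfl (fun w hw => hconst w (Set.mem_toFinset.mp hw)),
      Finset.sum_const, smul_eq_mul]
  have h2 : Ncnt Γ X u = (orb Γ u ∩ X).toFinset.card * c u := by
    have hmapsto : ∀ σ ∈ Finset.univ.filter (fun σ : Γ ≃g Γ => σ u ∈ X),
        σ u ∈ (orb Γ u ∩ X).toFinset := by
      intro σ hσ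
      simp only [Finset.mem_filter, Finset.mem_univ, true_and] at hσ
      exact Set.mem_toFinset.mpr ⟨⟨σ, rfl⟩, hσ⟩
    have := Finset.card_eq_sum_card_fiberwise hmapsto
    rw [Ncnt, this]
    have hfib : ∀ w ∈ (orb Γ u ∩ X).toFinset,
        ((Finset.univ.filter (fun σ : Γ ≃g Γ => σ u ∈ X)).filter
          (fun σ => σ u = w)).card = c w := by
      intro w hw
      have hwX : w ∈ X := (Set.mem_toFinset.mp hw).2
      congr 1
      rw [Finset.filter_filter]
      refine Finset.filter_congr (fun σ _ => ?_)
      simp only [and_iff_right_iff_imp]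
      intro h; rw [h]; exact hwX
    rw [Finset.sum_congr rfl hfib,
      Finset.sum_congr rfl (fun w hw => hconst w (Set.mem_toFinset.mp hw).1),
      Finset.sum_const, smul_eq_mul]
  rw [h2, h1, Set.ncard_eq_toFinset_card' (orb Γ u), Set.ncard_eq_toFinset_card' (orb Γ u ∩ X)]
  ring

end Aux

/-- **Lemma 2.1.** Let `Γ` be a finite graph with a vertex orbit `A = orb Γ v` under
`Aut(Γ)`, and suppose `5·Υ_v(D₅,Γ) = Υ_v^sym(D₅,Γ) > 0`. If `A` intersects some embedded
copy of `D₅` in `Γ`, then every minimum transversal `X` of the copies of `D₅` satisfies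
`|A ∩ X| = |A|/5`; if no copy of `D₅` meets `A`, then `A ∩ X = ∅`. -/
theorem orbit_marked_fraction {V : Type*} [Fintype V] (Γ : SimpleGraph V) (v : V)
    (heq : 5 * upsilon D5 Γ = upsilonSym D5 Γ) (hpos : 0 < upsilonSym D5 Γ)
    (X : Set V) (hX : IsTransversal D5 Γ X) (hmin : X.ncard = upsilon D5 Γ) :
    ((∃ f : Fin 5 → V, IsCopy D5 Γ f ∧ ∃ a, f a ∈ orb Γ v) →
      5 * (orb Γ v ∩ X).ncard = (orb Γ v).ncard) ∧
    ((¬ ∃ f : Fin 5 → V, IsCopy D5 Γ f ∧ ∃ a, f a ∈ orb Γ v) → orb Γ v ∩ X = ∅) := by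
  classical
  constructor
  · -- main case
    rintro ⟨f, hf, a₀, ha₀⟩
    set g := Fintype.card (Γ ≃g Γ) with hgdef
    have hg : 0 < g := Fintype.card_pos_iff.mpr ⟨RelIso.refl _⟩
    set N : V → ℕ := Ncnt Γ X with hNdef
    set k := X.ncard with hkdef
    set Y : Set V := {u | g ≤ 5 * N u} with hYdef
    have hmemY : ∀ u : V, u ∈ Y ↔ g ≤ 5 * N u := fun u => Iff.rfl
    have hYtrans : IsTransversal D5 Γ Y := by
      intro f' hf'
      by_contra hcon
      push_neg at hcon
      have hlt : ∀ a : Fin 5, 5 * N (f' a) + 1 ≤ g := by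
        intro a
        have := hcon a
        rw [hmemY] at this
        omega
      have h1 : g ≤ ∑ a : Fin 5, N (f' a) := copy_sum Γ X hX hf'
      have h2 : ∑ a : Fin 5, (5 * N (f' a) + 1) ≤ ∑ _a : Fin 5, g :=
        Finset.sum_le_sum (fun a _ => hlt a)
      rw [Finset.sum_add_distrib, ← Finset.mul_sum, Finset.sum_const, Finset.sum_const] at h2
      simp only [Finset.card_univ, Fintype.card_fin, smul_eq_mul] at h2
      omega
    have hYinv : GraphInvariant Γ Y := by
      intro σ
      ext w
      constructor
      · rintro ⟨u, hu, rfl⟩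
        rw [hmemY] at hu ⊢
        rw [hNdef, Ncnt_iso]
        exact hu
      · intro hw
        refine ⟨σ.symm w, ?_, by simp⟩
        rw [hmemY] at hw ⊢
        rw [hNdef, ← Ncnt_iso Γ X σ (σ.symm w)]
        simpa using hw
    have hsym5k : upsilonSym D5 Γ = 5 * k := by rw [hmin]; exact heq.symm
    have hle1 : 5 * k ≤ Y.ncard := by
      rw [← hsym5k]
      exact Nat.sInf_le ⟨Y, Set.toFinite _, rfl, hYtrans, hYinv⟩
    have hYcard : Y.ncard = Y.toFinset.card := Set.ncard_eq_toFinset_card' Y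
    have htot : ∑ u : V, N u = g * k := total_sum Γ X
    have hsplit : ∑ u ∈ Y.toFinset, N u + ∑ u ∈ Y.toFinsetᶜ, N u = g * k := by
      rw [Finset.sum_add_sum_compl, htot]
    have hYlb : g * Y.toFinset.card ≤ 5 * ∑ u ∈ Y.toFinset, N u := by
      calc g * Y.toFinset.card = ∑ _u ∈ Y.toFinset, g := by
            rw [Finset.sum_const, smul_eq_mul, mul_comm]
        _ ≤ ∑ u ∈ Y.toFinset, 5 * N u := Finset.sum_le_sum (fun u hu =>
            (hmemY u).mp (Set.mem_toFinset.mp hu))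
        _ = 5 * ∑ u ∈ Y.toFinset, N u := by rw [Finset.mul_sum]
    -- ∑_{Y} N ≤ total = g*k, so g * |Y| ≤ 5*g*k; with 5k ≤ |Y| get equalities
    have hAle : ∑ u ∈ Y.toFinset, N u ≤ g * k := by omega
    have hchain : g * (5 * k) ≤ 5 * (g * k) := by ring_nf; omega
    have hA_eq : ∑ u ∈ Y.toFinset, N u = g * k := by
      have : g * (5 * k) ≤ g * Y.toFinset.card :=
        Nat.mul_le_mul_left g (by omega)
      -- g*|Y| ≤ 5*A ≤ 5gk = g*5k ≤ g*|Y|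
      nlinarith [hYlb, hAle, hle1, hYcard]
    have hB0 : ∑ u ∈ Y.toFinsetᶜ, N u = 0 := by omega
    have hE2 : ∀ u : V, u ∉ Y → N u = 0 := by
      intro u hu
      refine (Finset.sum_eq_zero_iff.mp hB0) u ?_
      simp [Set.mem_toFinset, hu]
    have hYcard5k : Y.toFinset.card = 5 * k := by
      by_contra hne
      have hgt : 5 * k < Y.toFinset.card := by omega
      have : g * Y.toFinset.card ≤ 5 * (g * k) := le_trans hYlb (by omega)
      nlinarith
    have hE1 : ∀ u ∈ Y, 5 * N u = g := by
      intro u hu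
      by_contra hne
      have hlt : g < 5 * N u := lt_of_le_of_ne ((hmemY u).mp hu) (fun h => hne h.symm)
      have hstrict : ∑ w ∈ Y.toFinset, g < ∑ w ∈ Y.toFinset, 5 * N w :=
        Finset.sum_lt_sum (fun w hw => (hmemY w).mp (Set.mem_toFinset.mp hw))
          ⟨u, Set.mem_toFinset.mpr hu, hlt⟩
      rw [Finset.sum_const, smul_eq_mul, ← Finset.mul_sum, hA_eq, hYcard5k] at hstrict
      nlinarith
    have hNle : ∀ u : V, 5 * N u ≤ g := by
      intro u
      by_cases h : u ∈ Y
      · exact (hE1 u h).le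
      · rw [hE2 u h]; omega
    -- show f a₀ ∈ Y
    have hmem : f a₀ ∈ Y := by
      by_contra h
      have h0 : N (f a₀) = 0 := hE2 _ h
      have hstrict : ∑ a : Fin 5, 5 * N (f a) < ∑ _a : Fin 5, g :=
        Finset.sum_lt_sum (fun a _ => hNle _)
          ⟨a₀, Finset.mem_univ _, by rw [h0]; simpa using hg⟩
      have hS1 : g ≤ ∑ a : Fin 5, N (f a) := copy_sum Γ X hX hf
      rw [← Finset.mul_sum, Finset.sum_const] at hstrict
      simp only [Finset.card_univ, Fintype.card_fin, smul_eq_mul] at hstrict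
      omega
    have h5N : 5 * N (f a₀) = g := hE1 _ hmem
    have horb : N (f a₀) * (orb Γ (f a₀)).ncard = g * (orb Γ (f a₀) ∩ X).ncard :=
      orbit_count Γ X (f a₀)
    rw [orb_eq_of_mem Γ ha₀] at horb
    have : g * (5 * (orb Γ v ∩ X).ncard) = g * (orb Γ v).ncard := by
      calc g * (5 * (orb Γ v ∩ X).ncard) = 5 * (g * (orb Γ v ∩ X).ncard) := by ring
        _ = 5 * (N (f a₀) * (orb Γ v).ncard) := by rw [horb]
        _ = (5 * N (f a₀)) * (orb Γ v).ncard := by ring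
        _ = g * (orb Γ v).ncard := by rw [h5N]
    exact Nat.eq_of_mul_eq_mul_left hg this
  · -- no copy meets the orbit
    intro hno
    by_contra hne
    obtain ⟨x, hxo, hxX⟩ := Set.nonempty_iff_ne_empty.mpr hne
    have htrans' : IsTransversal D5 Γ (X \ orb Γ v) := by
      intro f hf
      obtain ⟨a, ha⟩ := hX f hf
      exact ⟨a, ha, fun hmem => hno ⟨f, hf, a, hmem⟩⟩
    have hss : X \ orb Γ v ⊂ X := by
      refine ⟨Set.diff_subset, fun h => ?_⟩
      exact (h hxX).2 hxo
    have hlt : (X \ orb Γ v).ncard < X.ncard := Set.ncard_lt_ncard hss (Set.toFinite X)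
    have hle : upsilon D5 Γ ≤ (X \ orb Γ v).ncard :=
      Nat.sInf_le ⟨X \ orb Γ v, Set.toFinite _, rfl, htrans'⟩
    omega
end

section
/- Every finite connected graph Γ that contains a subgraph isomorphic to D₅ and is not isomorphic to K₅ satisfies the strict inequality 5·Υ_v(D₅,Γ) > Υ_v^{sym}(D₅,Γ). Consequently, D₅ is not vertex-expensive in the class of connected graphs. -/
open SimpleGraph

/-!
Let `X` be a minimum transversal and weight each vertex `v` by the number of automorphisms
moving `v` into `X`. A copy of `K` on `k` vertices has total weight at least `|Aut Γ|`, and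
the total weight of all vertices is `|X| · |Aut Γ|`, so the vertices of weight at least
`|Aut Γ| / k` form an invariant transversal with at most `k · |X|` elements. If
`Υ_v^sym(K, Γ) ≥ k · Υ_v(K, Γ)` this bound is attained, which forces every copy of `K` to meet
`X` exactly once, every vertex on a copy to be moved into `X` by an automorphism, and every
such vertex to play every role in some copy.

For `K = D₅` these constraints close the vertex set of each copy under adjacency. In a connected
graph this leaves five vertices on which `Aut Γ` acts transitively, and a vertex-transitive
graph on five vertices with a vertex of degree three is `K₅`. Finally `Υ_v^sym ≤ |V| = 5` for
`K₅`, and `Υ_v^sym = 0` without copies, so `Υ_v^sym = 5 · Υ_v ≥ 6` never happens.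
-/

open Finset Function

variable {W V : Type*} {K : SimpleGraph W} {Γ : SimpleGraph V}

instance inst_s18 [Finite V] : Finite (Γ ≃g Γ) := Finite.of_injective _ RelIso.toEquiv_injective

lemma IsCopy.ne {f : W → V} (hf : IsCopy K Γ f) {a b : W} (h : a ≠ b) : f a ≠ f b :=
  hf.1.ne h

lemma IsCopy.comp_iso {f : W → V} (hf : IsCopy K Γ f) (σ : Γ ≃g Γ) : IsCopy K Γ (σ ∘ f) :=
  ⟨σ.injective.comp hf.1, fun a b h => σ.map_adj_iff.2 (hf.2 a b h)⟩

lemma IsTransversal.apply_mem_of_forall_ne {X : Set V} (hX : IsTransversal K Γ X) {f : W → V}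
    (hf : IsCopy K Γ f) {b : W} (h : ∀ c ≠ b, f c ∉ X) : f b ∈ X := by
  obtain ⟨c, hc⟩ := hX f hf
  by_cases hcb : c = b
  · exact hcb ▸ hc
  · exact absurd hc (h c hcb)

lemma graphInvariant_of_apply_mem_iff {X : Set V} (h : ∀ (σ : Γ ≃g Γ) v, σ v ∈ X ↔ v ∈ X) :
    GraphInvariant Γ X := by
  intro σ
  ext w
  refine ⟨?_, fun hw => ⟨σ.symm w, (h σ _).1 (by simpa using hw), by simp⟩⟩
  rintro ⟨v, hv, rfl⟩
  exact (h σ v).2 hv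

lemma upsilonSym_le_ncard {X : Set V} (hX : X.Finite) (hXK : IsTransversal K Γ X)
    (hXΓ : GraphInvariant Γ X) : upsilonSym K Γ ≤ X.ncard :=
  Nat.sInf_le ⟨X, hX, rfl, hXK, hXΓ⟩

lemma graphInvariant_setOf_isCopy_apply_eq (b : W) :
    GraphInvariant Γ {v | ∃ f : W → V, IsCopy K Γ f ∧ f b = v} := by
  refine graphInvariant_of_apply_mem_iff fun σ v => ⟨?_, ?_⟩
  · rintro ⟨f, hf, hfb⟩
    exact ⟨σ.symm ∘ f, hf.comp_iso σ.symm, by simp [hfb]⟩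
  · rintro ⟨f, hf, rfl⟩
    exact ⟨σ ∘ f, hf.comp_iso σ, rfl⟩

lemma upsilonSym_le_card [Fintype V] [Nonempty W] : upsilonSym K Γ ≤ Fintype.card V := by
  simpa using upsilonSym_le_ncard (K := K) (Γ := Γ) Set.finite_univ
    (fun _ _ => ⟨Classical.arbitrary W, trivial⟩) (graphInvariant_of_apply_mem_iff (by simp))

lemma upsilonSym_eq_zero (h : ∀ f : W → V, ¬ IsCopy K Γ f) : upsilonSym K Γ = 0 := by
  simpa using upsilonSym_le_ncard (K := K) (Γ := Γ) Set.finite_empty (fun f hf => (h f hf).elim)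
    (graphInvariant_of_apply_mem_iff (by simp))

lemma exists_isTransversal_card_eq_upsilon [Finite V] [Nonempty W] :
    ∃ X : Finset V, IsTransversal K Γ X ∧ #X = upsilon K Γ := by
  obtain ⟨X, hX, hcard, hXK⟩ : upsilon K Γ ∈ {n | ∃ X : Set V, X.Finite ∧ X.ncard = n ∧
      IsTransversal K Γ X} :=
    Nat.sInf_mem ⟨_, Set.univ, Set.finite_univ, rfl, fun _ _ => ⟨Classical.arbitrary W, trivial⟩⟩
  exact ⟨hX.toFinset, by simpa using hXK, by rw [← Set.ncard_eq_toFinset_card _ hX, hcard]⟩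

lemma one_le_card_filter_apply_mem [Fintype W] [DecidableEq V] (X : Finset V) {f : W → V}
    (hX : IsTransversal K Γ X) (hf : IsCopy K Γ f) (σ : Γ ≃g Γ) : 1 ≤ #{a | σ (f a) ∈ X} := by
  obtain ⟨a, ha⟩ := hX _ (hf.comp_iso σ)
  exact card_pos.2 ⟨a, mem_filter.2 ⟨mem_univ a, ha⟩⟩

section Counting

variable [DecidableEq V] [Fintype (Γ ≃g Γ)] (X : Finset V)

variable (Γ) in
def autHitCount (v : V) : ℕ := #{σ : Γ ≃g Γ | σ v ∈ X}

lemma autHitCount_apply (σ : Γ ≃g Γ) (v : V) : autHitCount Γ X (σ v) = autHitCount Γ X v :=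
  card_equiv (Equiv.mulRight σ) (by simp [RelIso.mul_apply])

lemma sum_autHitCount [Fintype V] :
    ∑ v, autHitCount Γ X v = #X * Fintype.card (Γ ≃g Γ) :=
  calc ∑ v, autHitCount Γ X v = ∑ σ : Γ ≃g Γ, #{v | σ v ∈ X} := by
        simp only [autHitCount, card_filter]
        exact sum_comm
    _ = ∑ _σ : Γ ≃g Γ, #X := sum_congr rfl fun σ _ => card_equiv σ.toEquiv (by simp)
    _ = #X * Fintype.card (Γ ≃g Γ) := by simp [mul_comm]

lemma sum_autHitCount_comp [Fintype W] (f : W → V) :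
    ∑ a, autHitCount Γ X (f a) = ∑ σ : Γ ≃g Γ, #{a | σ (f a) ∈ X} := by
  simp only [autHitCount, card_filter]
  exact sum_comm

lemma sum_card_aut_le_sum_mul_autHitCount [Fintype W] {f : W → V} (hX : IsTransversal K Γ X)
    (hf : IsCopy K Γ f) :
    ∑ _a : W, Fintype.card (Γ ≃g Γ) ≤ ∑ a, Fintype.card W * autHitCount Γ X (f a) := by
  rw [← mul_sum, sum_const, card_univ, smul_eq_mul, sum_autHitCount_comp]
  refine Nat.mul_le_mul_left _ ?_
  calc Fintype.card (Γ ≃g Γ) = ∑ _σ : Γ ≃g Γ, 1 := by simp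
    _ ≤ _ := sum_le_sum fun σ _ => one_le_card_filter_apply_mem X hX hf σ

lemma sum_mul_autHitCount_le [Fintype V] (s : Finset V) (k : ℕ) :
    ∑ v ∈ s, k * autHitCount Γ X v ≤ k * #X * Fintype.card (Γ ≃g Γ) :=
  calc ∑ v ∈ s, k * autHitCount Γ X v ≤ ∑ v, k * autHitCount Γ X v :=
        sum_le_sum_of_subset (subset_univ s)
    _ = k * #X * Fintype.card (Γ ≃g Γ) := by rw [← mul_sum, sum_autHitCount, mul_assoc]

variable (Γ) in
/-- By orbit–stabiliser, `autHitCount Γ X v / |Aut Γ| = |orbit v ∩ X| / |orbit v|`: these are the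
vertices whose orbit meets `X` in at least a `1 / k` fraction. -/
def heavyVertices [Fintype V] (k : ℕ) : Finset V :=
  {v | Fintype.card (Γ ≃g Γ) ≤ k * autHitCount Γ X v}

variable [Fintype V]

lemma graphInvariant_heavyVertices (k : ℕ) : GraphInvariant Γ ↑(heavyVertices Γ X k) :=
  graphInvariant_of_apply_mem_iff fun σ v => by simp [heavyVertices, autHitCount_apply]

lemma isTransversal_heavyVertices [Fintype W] (hX : IsTransversal K Γ X) :
    IsTransversal K Γ ↑(heavyVertices Γ X (Fintype.card W)) := by
  intro f hf
  obtain ⟨a₀, -⟩ := hX f hf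
  by_contra! hlight
  refine (sum_card_aut_le_sum_mul_autHitCount X hX hf).not_gt ?_
  exact sum_lt_sum_of_nonempty ⟨a₀, mem_univ _⟩ fun a _ => by
    simpa [heavyVertices] using hlight a

lemma card_heavyVertices_le (k : ℕ) : #(heavyVertices Γ X k) ≤ k * #X := by
  refine Nat.le_of_mul_le_mul_right ?_ (Fintype.card_pos_iff.2 ⟨RelIso.refl Γ.Adj⟩)
  calc #(heavyVertices Γ X k) * Fintype.card (Γ ≃g Γ)
      = ∑ _v ∈ heavyVertices Γ X k, Fintype.card (Γ ≃g Γ) := by simp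
    _ ≤ ∑ v ∈ heavyVertices Γ X k, k * autHitCount Γ X v :=
        sum_le_sum fun v hv => (mem_filter.1 hv).2
    _ ≤ k * #X * Fintype.card (Γ ≃g Γ) := sum_mul_autHitCount_le X _ k

section Extremal

variable {X} {k : ℕ} (hY : k * #X ≤ #(heavyVertices Γ X k))
include hY

lemma mul_autHitCount_eq_of_mem_heavyVertices {v : V} (hv : v ∈ heavyVertices Γ X k) :
    k * autHitCount Γ X v = Fintype.card (Γ ≃g Γ) := by
  set Y := heavyVertices Γ X k
  have hsum : ∑ _v ∈ Y, Fintype.card (Γ ≃g Γ) = ∑ v ∈ Y, k * autHitCount Γ X v := by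
    refine le_antisymm (sum_le_sum fun v hv => (mem_filter.1 hv).2) ?_
    calc ∑ v ∈ Y, k * autHitCount Γ X v ≤ k * #X * Fintype.card (Γ ≃g Γ) :=
          sum_mul_autHitCount_le X Y k
      _ ≤ #Y * Fintype.card (Γ ≃g Γ) := Nat.mul_le_mul_right _ hY
      _ = ∑ _v ∈ Y, Fintype.card (Γ ≃g Γ) := by simp
  exact ((sum_eq_sum_iff_of_le fun v hv => (mem_filter.1 hv).2).1 hsum v hv).symm

lemma mul_autHitCount_le (v : V) : k * autHitCount Γ X v ≤ Fintype.card (Γ ≃g Γ) := by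
  by_cases hv : v ∈ heavyVertices Γ X k
  · exact (mul_autHitCount_eq_of_mem_heavyVertices hY hv).le
  · exact (not_le.1 (by simpa [heavyVertices] using hv)).le

lemma exists_apply_mem_of_mem_heavyVertices {v : V} (hv : v ∈ heavyVertices Γ X k) :
    ∃ σ : Γ ≃g Γ, σ v ∈ X := by
  have hpos : 0 < k * autHitCount Γ X v := by
    rw [mul_autHitCount_eq_of_mem_heavyVertices hY hv]
    exact Fintype.card_pos_iff.2 ⟨RelIso.refl Γ.Adj⟩
  obtain ⟨σ, hσ⟩ := card_pos.1 (Nat.pos_of_mul_pos_left hpos)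
  exact ⟨σ, (mem_filter.1 hσ).2⟩

end Extremal

section ExtremalCopy

variable [Fintype W] {X} (hY : Fintype.card W * #X ≤ #(heavyVertices Γ X (Fintype.card W)))
  (hX : IsTransversal K Γ X) {f : W → V} (hf : IsCopy K Γ f)
include hY hX hf

lemma apply_mem_heavyVertices (a : W) : f a ∈ heavyVertices Γ X (Fintype.card W) := by
  by_contra ha
  refine (sum_card_aut_le_sum_mul_autHitCount X hX hf).not_gt ?_
  exact sum_lt_sum (fun b _ => mul_autHitCount_le hY (f b)) ⟨a, mem_univ a, by
    simpa [heavyVertices] using ha⟩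

lemma card_filter_apply_mem_le_one : #{a | f a ∈ X} ≤ 1 := by
  have hk : 0 < Fintype.card W := Fintype.card_pos_iff.2 ⟨(hX f hf).choose⟩
  have hsum : ∑ a, autHitCount Γ X (f a) = Fintype.card (Γ ≃g Γ) := by
    have := sum_congr rfl fun a (_ : a ∈ univ) =>
      mul_autHitCount_eq_of_mem_heavyVertices hY (apply_mem_heavyVertices hY hX hf a)
    rw [← mul_sum, sum_const, card_univ, smul_eq_mul] at this
    exact Nat.eq_of_mul_eq_mul_left hk this
  rw [sum_autHitCount_comp, Fintype.card, card_eq_sum_ones] at hsum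
  have := (sum_eq_sum_iff_of_le fun σ _ => one_le_card_filter_apply_mem X hX hf σ).1 hsum.symm
    1 (mem_univ _)
  exact this.symm.le

end ExtremalCopy

end Counting

/-- The structure forced on a minimum transversal when `Υ_v^sym(K, Γ) ≥ |V(K)| · Υ_v(K, Γ)`. -/
structure IsTightTransversal (K : SimpleGraph W) (Γ : SimpleGraph V) (X : Set V) : Prop where
  isTransversal : IsTransversal K Γ X
  eq_of_mem {f : W → V} {a b : W} : IsCopy K Γ f → f a ∈ X → f b ∈ X → a = b
  exists_aut_apply_mem {f : W → V} (a : W) : IsCopy K Γ f → ∃ σ : Γ ≃g Γ, σ (f a) ∈ X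
  exists_isCopy_apply_eq {f : W → V} (a b : W) : IsCopy K Γ f → ∃ g, IsCopy K Γ g ∧ g b = f a

theorem exists_isTightTransversal [Fintype W] [Nonempty W] [Finite V]
    (h : Fintype.card W * upsilon K Γ ≤ upsilonSym K Γ) :
    ∃ X : Set V, IsTightTransversal K Γ X := by
  classical
  have := Fintype.ofFinite V
  have := Fintype.ofFinite (Γ ≃g Γ)
  obtain ⟨X, hX, hXcard⟩ := exists_isTransversal_card_eq_upsilon (K := K) (Γ := Γ)
  set Y := heavyVertices Γ X (Fintype.card W)
  have hYsym : upsilonSym K Γ ≤ #Y := by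
    simpa using upsilonSym_le_ncard Y.finite_toSet (isTransversal_heavyVertices X hX)
      (graphInvariant_heavyVertices X _)
  have hY : Fintype.card W * #X ≤ #Y := hXcard ▸ h.trans hYsym
  refine ⟨X, hX, fun hf ha hb => ?_, fun a hf => ?_, fun {f} a b hf => ?_⟩
  · exact card_le_one.1 (card_filter_apply_mem_le_one hY hX hf) _ (by simpa using ha) _
      (by simpa using hb)
  · exact exists_apply_mem_of_mem_heavyVertices hY (apply_mem_heavyVertices hY hX hf a)
  · set Z : Set V := {v | ∃ g : W → V, IsCopy K Γ g ∧ g b = v}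
    have hZY : Z ⊆ Y := by
      rintro _ ⟨g, hg, rfl⟩
      exact apply_mem_heavyVertices hY hX hg b
    have hZ : Z = Y := Set.eq_of_subset_of_ncard_le hZY <|
      calc (Y : Set V).ncard = #Y := Set.ncard_coe_finset Y
        _ ≤ Fintype.card W * #X := card_heavyVertices_le X _
        _ ≤ upsilonSym K Γ := hXcard ▸ h
        _ ≤ Z.ncard := upsilonSym_le_ncard (Set.toFinite Z) (fun g hg => ⟨b, g, hg, rfl⟩)
            (graphInvariant_setOf_isCopy_apply_eq b)
    exact (hZ ▸ apply_mem_heavyVertices hY hX hf a : f a ∈ Z)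

lemma SimpleGraph.Reachable.mem_of_forall_adj_mem {S : Set V} {u v : V} (h : Γ.Reachable u v)
    (hS : ∀ x ∈ S, ∀ y, Γ.Adj x y → y ∈ S) (hu : u ∈ S) : v ∈ S := by
  rw [reachable_iff_reflTransGen] at h
  induction h with
  | refl => exact hu
  | tail _ hxy ih => exact hS _ ih _ hxy

theorem eq_top_of_odd_card_of_le_degree [Fintype V] [DecidableRel Γ.Adj]
    (hodd : Odd (Fintype.card V)) (htrans : ∀ u v, ∃ σ : Γ ≃g Γ, σ u = v) {v : V}
    (hv : Fintype.card V - 2 ≤ Γ.degree v) : Γ = ⊤ := by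
  have hreg (w : V) : Γ.degree w = Γ.degree v := by
    obtain ⟨σ, rfl⟩ := htrans w v
    exact (Iso.degree_eq σ w).symm
  have hsum := Γ.sum_degrees_eq_twice_card_edges
  rw [sum_congr rfl fun w _ => hreg w, sum_const, card_univ, smul_eq_mul] at hsum
  have heven : Even (Γ.degree v) :=
    (Nat.even_mul.1 (hsum ▸ even_two_mul _)).resolve_left (Nat.not_even_iff_odd.2 hodd)
  have hlt := Γ.degree_lt_card_verts v
  have hfull : Γ.degree v = Fintype.card V - 1 := by
    obtain ⟨r, hr⟩ := heven
    obtain ⟨m, hm⟩ := hodd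
    omega
  ext u w
  exact ⟨Adj.ne, fun huw => (Γ.degree_eq_card_sub_one u).1 ((hreg u).trans hfull) huw⟩

section D5

variable {X : Set V} {f : Fin 5 → V}

lemma isCopy_D5_iff : IsCopy D5 Γ f ↔ Injective f ∧ Γ.Adj (f 0) (f 1) ∧ Γ.Adj (f 0) (f 2) ∧
    Γ.Adj (f 1) (f 2) ∧ Γ.Adj (f 1) (f 3) ∧ Γ.Adj (f 2) (f 4) := by
  refine ⟨fun hf => ⟨hf.1, hf.2 _ _ (by simp [D5]), hf.2 _ _ (by simp [D5]),
    hf.2 _ _ (by simp [D5]), hf.2 _ _ (by simp [D5]), hf.2 _ _ (by simp [D5])⟩, ?_⟩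
  rintro ⟨hinj, h01, h02, h12, h13, h24⟩
  refine ⟨hinj, fun i j hij => ?_⟩
  fin_cases i <;> fin_cases j <;> simp [D5] at hij <;> first | assumption | exact Adj.symm ‹_›

lemma isCopy_D5_vec {a b c d e : V} (hab : Γ.Adj a b) (hac : Γ.Adj a c) (hbc : Γ.Adj b c)
    (hbd : Γ.Adj b d) (hce : Γ.Adj c e) (had : a ≠ d) (hae : a ≠ e) (hbe : b ≠ e) (hcd : c ≠ d)
    (hde : d ≠ e) : IsCopy D5 Γ ![a, b, c, d, e] := by
  refine isCopy_D5_iff.2 ⟨fun i j hij => ?_, hab, hac, hbc, hbd, hce⟩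
  have := hab.ne; have := hac.ne; have := hbc.ne; have := hbd.ne; have := hce.ne
  fin_cases i <;> fin_cases j <;> simp_all [eq_comm]

lemma IsCopy.swap (hf : IsCopy D5 Γ f) : IsCopy D5 Γ (f ∘ ![0, 2, 1, 4, 3]) := by
  obtain ⟨hinj, h01, h02, h12, h13, h24⟩ := isCopy_D5_iff.1 hf
  exact isCopy_D5_iff.2 ⟨hinj.comp (by decide), h02, h01, h12.symm, h24, h13⟩

lemma IsCopy.three_le_degree_one [Fintype V] [DecidableRel Γ.Adj] (hf : IsCopy D5 Γ f) :
    3 ≤ Γ.degree (f 1) := by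
  classical
  obtain ⟨hinj, h01, -, h12, h13, -⟩ := isCopy_D5_iff.1 hf
  calc 3 = #(({0, 2, 3} : Finset (Fin 5)).image f) := by rw [card_image_of_injective _ hinj]; rfl
    _ ≤ #(Γ.neighborFinset (f 1)) := card_le_card <| by
        simp only [image_insert, image_singleton, insert_subset_iff, singleton_subset_iff,
          mem_neighborFinset]
        exact ⟨h01.symm, h12, h13⟩
    _ = Γ.degree (f 1) := card_neighborFinset_eq_degree _ _

namespace IsTightTransversal

variable (hX : IsTightTransversal D5 Γ X) (hf : IsCopy D5 Γ f)
include hX hf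

lemma apply_notMem {a b : Fin 5} (ha : f a ∈ X) (hba : b ≠ a) : f b ∉ X :=
  fun hb => hba (hX.eq_of_mem hf hb ha)

theorem mem_range_of_adj_zero {u : V} (hu : Γ.Adj (f 0) u) : u ∈ Set.range f := by
  by_contra hur
  have hne (i : Fin 5) : f i ≠ u := fun h => hur ⟨i, h⟩
  obtain ⟨-, h01, h02, h12, h13, h24⟩ := isCopy_D5_iff.1 hf
  obtain ⟨σ, hσ⟩ := hX.exists_aut_apply_mem 3 hf
  have hg : IsCopy D5 Γ ![f 1, f 0, f 2, u, f 4] :=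
    isCopy_D5_vec h01.symm h12 h02 hu h24 (hne 1) (hf.ne (by decide)) (hf.ne (by decide))
      (hne 2) (hne 4).symm
  have hg' : IsCopy D5 Γ ![f 2, f 0, f 1, u, f 3] :=
    isCopy_D5_vec h02.symm h12.symm h01 hu h13 (hne 2) (hf.ne (by decide)) (hf.ne (by decide))
      (hne 1) (hne 3).symm
  -- `σ ∘ f` meets `X` only in `σ (f 3)`; `σ ∘ ![f 1, f 0, f 2, u, f 4]` shares its other
  -- vertices, so it must meet `X` in `σ u`.
  have hσu : σ u ∈ X := hX.isTransversal.apply_mem_of_forall_ne (b := 3) (hg.comp_iso σ) <| by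
    intro c hc
    fin_cases c <;>
      first | exact absurd rfl hc | exact hX.apply_notMem (hf.comp_iso σ) hσ (by decide)
  exact absurd (hX.eq_of_mem (a := 3) (b := 4) (hg'.comp_iso σ) hσu hσ) (by decide)

theorem eq_of_adj_of_mem {i : Fin 5} {p q : V} (hp : Γ.Adj (f i) p) (hq : Γ.Adj (f i) q)
    (hpX : p ∈ X) (hqX : q ∈ X) : p = q := by
  obtain ⟨g, hg, hgi⟩ := hX.exists_isCopy_apply_eq i 0 hf
  obtain ⟨j, rfl⟩ := hX.mem_range_of_adj_zero hg (hgi ▸ hp)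
  obtain ⟨k, rfl⟩ := hX.mem_range_of_adj_zero hg (hgi ▸ hq)
  rw [hX.eq_of_mem hg hpX hqX]

theorem mem_range_of_adj_one {u : V} (hu : Γ.Adj (f 1) u) : u ∈ Set.range f := by
  by_contra hur
  have hne (i : Fin 5) : f i ≠ u := fun h => hur ⟨i, h⟩
  obtain ⟨-, h01, h02, h12, h13, h24⟩ := isCopy_D5_iff.1 hf
  obtain ⟨σ, hσ⟩ := hX.exists_aut_apply_mem 3 hf
  have hg : IsCopy D5 Γ ![f 0, f 1, f 2, u, f 4] :=
    isCopy_D5_vec h01 h02 h12 hu h24 (hne 0) (hf.ne (by decide)) (hf.ne (by decide)) (hne 2)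
      (hne 4).symm
  have hσu : σ u ∈ X := hX.isTransversal.apply_mem_of_forall_ne (b := 3) (hg.comp_iso σ) <| by
    intro c hc
    fin_cases c <;>
      first | exact absurd rfl hc | exact hX.apply_notMem (hf.comp_iso σ) hσ (by decide)
  exact hne 3 (σ.injective (hX.eq_of_adj_of_mem (hf.comp_iso σ) (i := 1) (σ.map_adj_iff.2 hu)
    (σ.map_adj_iff.2 h13) hσu hσ)).symm

theorem mem_range_of_adj_two {u : V} (hu : Γ.Adj (f 2) u) : u ∈ Set.range f :=
  Set.range_comp_subset_range _ f (hX.mem_range_of_adj_one hf.swap hu)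

theorem exists_adj_adj {i : Fin 5} {u : V} (hu : Γ.Adj (f i) u) :
    ∃ w, Γ.Adj (f i) w ∧ Γ.Adj u w := by
  obtain ⟨g, hg, hgi⟩ := hX.exists_isCopy_apply_eq i 0 hf
  rw [← hgi] at hu ⊢
  obtain ⟨-, h01, h02, h12, h13, h24⟩ := isCopy_D5_iff.1 hg
  obtain ⟨j, rfl⟩ := hX.mem_range_of_adj_zero hg hu
  fin_cases j
  · exact (hu.ne rfl).elim
  · exact ⟨g 2, h02, h12⟩
  · exact ⟨g 1, h01, h12.symm⟩
  · exact ⟨g 1, h01, h13.symm⟩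
  · exact ⟨g 2, h02, h24.symm⟩

theorem mem_range_of_adj_three {u : V} (hu : Γ.Adj (f 3) u) : u ∈ Set.range f := by
  obtain ⟨hinj, h01, h02, h12, h13, h24⟩ := isCopy_D5_iff.1 hf
  -- The triangles on the edges `f 3 f 1` and `f 4 f 2` supply enough edges to make `f 3` the
  -- apex of a copy on the same five vertices.
  suffices ∃ π : Fin 5 → Fin 5, π 0 = 3 ∧ IsCopy D5 Γ (f ∘ π) by
    obtain ⟨π, hπ, hfπ⟩ := this
    exact Set.range_comp_subset_range π f (hX.mem_range_of_adj_zero hfπ (by simpa [hπ] using hu))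
  have hd : Γ.Adj (f 0) (f 3) ∨ Γ.Adj (f 2) (f 3) ∨ Γ.Adj (f 3) (f 4) ∧ Γ.Adj (f 1) (f 4) := by
    obtain ⟨w, hdw, hbw⟩ := hX.exists_adj_adj hf h13.symm
    obtain ⟨j, rfl⟩ := hX.mem_range_of_adj_one hf hbw
    fin_cases j
    exacts [Or.inl hdw.symm, (hbw.ne rfl).elim, Or.inr (Or.inl hdw.symm), (hdw.ne rfl).elim,
      Or.inr (Or.inr ⟨hdw, hbw⟩)]
  have he : Γ.Adj (f 0) (f 4) ∨ Γ.Adj (f 1) (f 4) ∨ Γ.Adj (f 2) (f 3) := by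
    obtain ⟨x, hex, hcx⟩ := hX.exists_adj_adj hf h24.symm
    obtain ⟨k, rfl⟩ := hX.mem_range_of_adj_two hf hcx
    fin_cases k
    exacts [Or.inl hex.symm, Or.inr (Or.inl hex.symm), (hcx.ne rfl).elim,
      Or.inr (Or.inr hcx), (hex.ne rfl).elim]
  rcases hd with had | hcd | ⟨hde, hbe⟩
  · rcases he with hae | hbe | hcd
    · exact ⟨![3, 1, 0, 2, 4], rfl,
        isCopy_D5_iff.2 ⟨hinj.comp (by decide), h13.symm, had.symm, h01.symm, h12, hae⟩⟩
    · exact ⟨![3, 0, 1, 2, 4], rfl,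
        isCopy_D5_iff.2 ⟨hinj.comp (by decide), had.symm, h13.symm, h01, h02, hbe⟩⟩
    · exact ⟨![3, 1, 2, 0, 4], rfl,
        isCopy_D5_iff.2 ⟨hinj.comp (by decide), h13.symm, hcd.symm, h12, h01.symm, h24⟩⟩
  · exact ⟨![3, 1, 2, 0, 4], rfl,
      isCopy_D5_iff.2 ⟨hinj.comp (by decide), h13.symm, hcd.symm, h12, h01.symm, h24⟩⟩
  · exact ⟨![3, 1, 4, 0, 2], rfl,
      isCopy_D5_iff.2 ⟨hinj.comp (by decide), h13.symm, hde, hbe, h01.symm, h24.symm⟩⟩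

theorem mem_range_of_adj_four {u : V} (hu : Γ.Adj (f 4) u) : u ∈ Set.range f :=
  Set.range_comp_subset_range _ f (hX.mem_range_of_adj_three hf.swap hu)

theorem mem_range_of_adj {i : Fin 5} {u : V} (hu : Γ.Adj (f i) u) : u ∈ Set.range f := by
  fin_cases i
  exacts [hX.mem_range_of_adj_zero hf hu, hX.mem_range_of_adj_one hf hu,
    hX.mem_range_of_adj_two hf hu, hX.mem_range_of_adj_three hf hu, hX.mem_range_of_adj_four hf hu]

theorem range_eq_univ (hconn : Γ.Connected) : Set.range f = Set.univ :=
  Set.eq_univ_of_forall fun v => (hconn.preconnected (f 0) v).mem_of_forall_adj_mem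
    (by rintro _ ⟨i, rfl⟩ u hu; exact hX.mem_range_of_adj hf hu) ⟨0, rfl⟩

theorem card_eq_five [Fintype V] (hconn : Γ.Connected) : Fintype.card V = 5 := by
  have hbij : Bijective f := ⟨hf.1, Set.range_eq_univ.1 (hX.range_eq_univ hf hconn)⟩
  simpa using (Fintype.card_of_bijective hbij).symm

theorem exists_aut_apply_eq (hconn : Γ.Connected) (u v : V) : ∃ σ : Γ ≃g Γ, σ u = v := by
  have hsurj := Set.range_eq_univ.1 (hX.range_eq_univ hf hconn)
  obtain ⟨i, rfl⟩ := hsurj u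
  obtain ⟨j, rfl⟩ := hsurj v
  obtain ⟨σ, hσ⟩ := hX.exists_aut_apply_mem i hf
  obtain ⟨τ, hτ⟩ := hX.exists_aut_apply_mem j hf
  obtain ⟨k, hk⟩ := hsurj (σ (f i))
  obtain ⟨l, hl⟩ := hsurj (τ (f j))
  -- `X` meets the copy `f`, which is all of `V`, in a single vertex.
  have hστ : σ (f i) = τ (f j) := by
    rw [← hk] at hσ ⊢
    rw [← hl] at hτ ⊢
    rw [hX.eq_of_mem hf hσ hτ]
  exact ⟨σ.trans τ.symm, by simp [hστ]⟩

end IsTightTransversal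

end D5

/-- **Theorem 2.2 and Theorem 1.3.** Every finite connected graph `Γ` that contains a
subgraph isomorphic to `D₅` and is not isomorphic to `K₅` satisfies the strict inequality
`5·Υ_v(D₅,Γ) > Υ_v^sym(D₅,Γ)`. Consequently, `D₅` is not vertex-expensive in the class of
connected graphs: it is not the case that for every `m` there is a finite connected graph
`Γ_m` with `Υ_v^sym(D₅,Γ_m) = 5·Υ_v(D₅,Γ_m) ≥ m`. -/
theorem D5_not_expensive :
    (∀ (V : Type) [Fintype V] (Γ : SimpleGraph V), Γ.Connected →
      (∃ f : Fin 5 → V, IsCopy D5 Γ f) → IsEmpty (Γ ≃g (⊤ : SimpleGraph (Fin 5))) →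
      upsilonSym D5 Γ < 5 * upsilon D5 Γ) ∧
    ¬ (∀ m : ℕ, ∃ (V : Type) (_ : Fintype V) (Γ : SimpleGraph V), Γ.Connected ∧
        upsilonSym D5 Γ = 5 * upsilon D5 Γ ∧ m ≤ upsilonSym D5 Γ) := by
  refine ⟨fun V _ Γ hconn ⟨f, hf⟩ hK5 => ?_, fun h => ?_⟩
  · classical
    by_contra! h
    obtain ⟨X, hX⟩ := exists_isTightTransversal (K := D5) (Γ := Γ) (by simpa using h)
    have hcard := hX.card_eq_five hf hconn
    have htop : Γ = ⊤ := eq_top_of_odd_card_of_le_degree (by rw [hcard]; decide)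
      (hX.exists_aut_apply_eq hf hconn) (v := f 1) (by have := hf.three_le_degree_one; omega)
    subst htop
    exact hK5.false (Iso.completeGraph (Fintype.equivFinOfCardEq hcard))
  · obtain ⟨V, _, Γ, hconn, heq, h6⟩ := h 6
    by_cases hcopy : ∃ f, IsCopy D5 Γ f
    · obtain ⟨f, hf⟩ := hcopy
      obtain ⟨X, hX⟩ := exists_isTightTransversal (K := D5) (Γ := Γ) (by simpa using heq.ge)
      have hle := upsilonSym_le_card (K := D5) (Γ := Γ)
      rw [hX.card_eq_five hf hconn] at hle
      omega
    · rw [upsilonSym_eq_zero (not_exists.1 hcopy)] at h6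
      omega
end
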